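/- arXiv:1904.01839 — 3 statements merged into one kernel-verified Lean document; each statement's English description precedes it below -/
import Mathlib

section
/- Let τ ∈ [0,1] and let ŵ : [0,∞) → ℝ⁸ be twice continuously differentiable with Dᵢŵᵢ″(x) + F^τᵢ(ŵ(x)) = 0 for all x ≥ 0, ŵ′(0) = 0, ŵ(x) → 0 as x → +∞, such that ŵᵢ(x) > 0 and ŵᵢ′(x) ≤ 0 for every i and every x ≥ 0, and ŵ(x) ∈ 𝒞 for all x ≥ 0. Then ŵᵢ′(x) < 0 for every i ∈ {1,…,8} and every x > 0. -/
open Filter Topology Matrix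
open scoped ENNReal

noncomputable section

/-- The positive parameters of the blood coagulation system.
Indices `0..7` of `k`, `h`, `D` correspond to `k₁..k₈`, `h₁..h₈`, `D₁..D₈`;
indices `2..7` of `ρ` correspond to `ρ₃..ρ₈` (so `T⁰ = ρ₈ = ρ 7`). -/
structure Params where
  k : Fin 8 → ℝ
  kb6 : ℝ
  kb8 : ℝ
  h : Fin 8 → ℝ
  ρ : Fin 8 → ℝ
  D : Fin 8 → ℝ

/-- All parameters are positive (`ρ i` only for the meaningful indices `i ≥ 2`). -/
def Params.Pos (p : Params) : Prop :=
  (∀ i, 0 < p.k i) ∧ 0 < p.kb6 ∧ 0 < p.kb8 ∧ (∀ i, 0 < p.h i) ∧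
    (∀ i : Fin 8, 2 ≤ (i : ℕ) → 0 < p.ρ i) ∧ (∀ i, 0 < p.D i)

/-- The reaction terms `F = (F₁,…,F₈)` (component `i-1` is `Fᵢ`, `v (i-1)` is `vᵢ`). -/
def Fvec (p : Params) (v : Fin 8 → ℝ) : Fin 8 → ℝ :=
  ![p.k 0 * v 2 * v 5 - p.h 0 * v 0,
    p.k 1 * v 3 * v 4 - p.h 1 * v 1,
    p.k 2 * v 7 * (p.ρ 2 - v 2) - p.h 2 * v 2,
    p.k 3 * v 7 * (p.ρ 3 - v 3) - p.h 3 * v 3,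
    p.k 4 * v 6 * (p.ρ 4 - v 4) - p.h 4 * v 4,
    (p.k 5 * v 4 + p.kb6 * v 1) * (p.ρ 5 - v 5) - p.h 5 * v 5,
    p.k 6 * v 7 * (p.ρ 6 - v 6) - p.h 6 * v 6,
    (p.k 7 * v 5 + p.kb8 * v 0) * (p.ρ 7 - v 7) - p.h 7 * v 7]

def phi3 (p : Params) (T : ℝ) : ℝ := p.k 2 * p.ρ 2 * T / (p.k 2 * T + p.h 2)

def phi4 (p : Params) (T : ℝ) : ℝ := p.k 3 * p.ρ 3 * T / (p.k 3 * T + p.h 3)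

def phi7 (p : Params) (T : ℝ) : ℝ := p.k 6 * p.ρ 6 * T / (p.k 6 * T + p.h 6)

def phi5 (p : Params) (T : ℝ) : ℝ :=
  p.k 4 * p.ρ 4 * phi7 p T / (p.k 4 * phi7 p T + p.h 4)

def phi2 (p : Params) (T : ℝ) : ℝ := p.k 1 / p.h 1 * (phi4 p T * phi5 p T)

def phi6 (p : Params) (T : ℝ) : ℝ :=
  p.ρ 5 * (p.k 5 * phi5 p T + p.kb6 * phi2 p T) /
    (p.k 5 * phi5 p T + p.kb6 * phi2 p T + p.h 5)

def phi1 (p : Params) (T : ℝ) : ℝ := p.k 0 / p.h 0 * (phi3 p T * phi6 p T)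

/-- `P(T) = (k₈φ₆(T) + k̄₈φ₁(T))(T⁰ − T) − h₈T`. -/
def Ppoly (p : Params) (T : ℝ) : ℝ :=
  (p.k 7 * phi6 p T + p.kb8 * phi1 p T) * (p.ρ 7 - T) - p.h 7 * T

/-- The vector `(φ₁(T),…,φ₇(T),T)`; `phivec p T̄ = w̄`, `phivec p T⁻ = w⁻`. -/
def phivec (p : Params) (T : ℝ) : Fin 8 → ℝ :=
  ![phi1 p T, phi2 p T, phi3 p T, phi4 p T, phi5 p T, phi6 p T, phi7 p T, T]

/-- Condition (P): `P` has exactly the three nonnegative zeros `0 < T̄ < T⁻`, with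
`P′(0) < 0`, `P′(T̄) > 0`, `P′(T⁻) < 0`. -/
def CondP (p : Params) (Tb Tm : ℝ) : Prop :=
  0 < Tb ∧ Tb < Tm ∧
    (∀ T : ℝ, 0 ≤ T → (Ppoly p T = 0 ↔ T = 0 ∨ T = Tb ∨ T = Tm)) ∧
    deriv (Ppoly p) 0 < 0 ∧ 0 < deriv (Ppoly p) Tb ∧ deriv (Ppoly p) Tm < 0

/-- `g` is smooth, nonnegative on `[0,∞)`, with support inside `(T̄, T⁻)`. -/
def GoodG (Tb Tm : ℝ) (g : ℝ → ℝ) : Prop :=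
  ContDiff ℝ (⊤ : ℕ∞) g ∧ (∀ s : ℝ, 0 ≤ s → 0 ≤ g s) ∧ tsupport g ⊆ Set.Ioo Tb Tm

/-- The homotopy `F^τ`: components `1..7` are those of `F` and
`F^τ₈(v) = α^τ F₈(v) + β^τ P(v₈) + γ^τ g(v₈)`. -/
def Ftau (p : Params) (τ₁ : ℝ) (g : ℝ → ℝ) (τ : ℝ) (v : Fin 8 → ℝ) : Fin 8 → ℝ :=
  fun i =>
    if i = 7 then
      (if τ < τ₁ then 1 else (1 - τ) / (1 - τ₁)) * Fvec p v 7 +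
        (if τ < τ₁ then 0 else (τ - τ₁) / (1 - τ₁)) * Ppoly p (v 7) +
        (if τ < τ₁ then τ else τ₁) * g (v 7)
    else Fvec p v i

/-- The set `𝒞 = {v ∈ ℝ⁸ : vᵢ ≥ 0 for all i, vᵢ ≤ ρᵢ for i = 3,…,8}`. -/
def CSet (p : Params) : Set (Fin 8 → ℝ) :=
  {v | (∀ i, 0 ≤ v i) ∧ ∀ i : Fin 8, 2 ≤ (i : ℕ) → v i ≤ p.ρ i}

/-- The partial derivative `∂FFᵢ/∂vⱼ` at `v`. -/
def pd (FF : (Fin 8 → ℝ) → Fin 8 → ℝ) (i j : Fin 8) (v : Fin 8 → ℝ) : ℝ :=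
  deriv (fun t => FF (Function.update v j t) i) (v j)

/-- The Jacobian matrix of `FF` at `v`. -/
def Jac (FF : (Fin 8 → ℝ) → Fin 8 → ℝ) (v : Fin 8 → ℝ) : Matrix (Fin 8) (Fin 8) ℝ :=
  fun i j => pd FF i j v

/-- `lam ∈ ℂ` is an eigenvalue of the real matrix `J`. -/
def IsEig (J : Matrix (Fin 8) (Fin 8) ℝ) (lam : ℂ) : Prop :=
  ∃ x : Fin 8 → ℂ, x ≠ 0 ∧ (J.map Complex.ofReal) *ᵥ x = lam • x

/-- A pulse for the reaction term `FF`: a `C²` decreasing positive solution of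
`D w″ + FF(w) = 0` on `[0,∞)` with `w′(0) = 0` and `w(+∞) = 0`. -/
def IsPulse (p : Params) (FF : (Fin 8 → ℝ) → Fin 8 → ℝ) (w : ℝ → Fin 8 → ℝ) : Prop :=
  (∀ i, ContDiff ℝ 2 fun x => w x i) ∧
    (∀ i : Fin 8, ∀ x : ℝ, 0 ≤ x →
      p.D i * deriv (deriv (fun y => w y i)) x + FF (w x) i = 0) ∧
    (∀ i, deriv (fun y => w y i) 0 = 0) ∧
    (∀ i, Tendsto (fun x => w x i) atTop (𝓝 0)) ∧
    (∀ i : Fin 8, ∀ x : ℝ, 0 < x → deriv (fun y => w y i) x < 0)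

/-- A travelling wave for `FF` with speed `c`, connecting `wm` (at `−∞`) to `0` (at `+∞`). -/
def IsWave (p : Params) (FF : (Fin 8 → ℝ) → Fin 8 → ℝ) (wm : Fin 8 → ℝ) (c : ℝ)
    (u : ℝ → Fin 8 → ℝ) : Prop :=
  (∀ i, ContDiff ℝ 2 fun x => u x i) ∧
    (∀ i : Fin 8, ∀ x : ℝ,
      p.D i * deriv (deriv (fun y => u y i)) x + c * deriv (fun y => u y i) x +
        FF (u x) i = 0) ∧
    (∀ i, Tendsto (fun x => u x i) atBot (𝓝 (wm i))) ∧
    (∀ i, Tendsto (fun x => u x i) atTop (𝓝 0))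

/-- The weighted function `x ↦ μ(x)·z(x)` with `μ(x) = √(1+x²)`. -/
def wtd (z : ℝ → Fin 8 → ℝ) : ℝ → Fin 8 → ℝ := fun x => Real.sqrt (1 + x ^ 2) • z x

/-- The weighted Hölder norm `‖z‖_{E¹_μ}`, valued in `ℝ≥0∞`
(the norm on `ℝ⁸ = Fin 8 → ℝ` is the maximum norm). -/
def E1norm (α : ℝ) (z : ℝ → Fin 8 → ℝ) : ℝ≥0∞ :=
  (⨆ x ∈ Set.Ici (0 : ℝ), ENNReal.ofReal
      (‖wtd z x‖ + ‖deriv (wtd z) x‖ + ‖deriv (deriv (wtd z)) x‖)) +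
    ⨆ x ∈ Set.Ici (0 : ℝ), ⨆ y ∈ Set.Ici (0 : ℝ), ⨆ _ : x ≠ y,
      ENNReal.ofReal (‖deriv (deriv (wtd z)) x - deriv (deriv (wtd z)) y‖ / |x - y| ^ α)

/-- A solution of the scalar pulse problem `D₈T″ + P(T) + τ₁g(T) = 0` on `[0,∞)`,
`T′(0) = 0`, `T(+∞) = 0`, `T′ < 0` on `(0,∞)`. -/
def ScalarPulse (p : Params) (τ₁ : ℝ) (g : ℝ → ℝ) (T : ℝ → ℝ) : Prop :=
  ContDiff ℝ 2 T ∧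
    (∀ x : ℝ, 0 ≤ x → p.D 7 * deriv (deriv T) x + Ppoly p (T x) + τ₁ * g (T x) = 0) ∧
    deriv T 0 = 0 ∧ Tendsto T atTop (𝓝 0) ∧ ∀ x : ℝ, 0 < x → deriv T x < 0


/-- A function that is nonnegative, bounded by `B`, and `C`-Lipschitz on `[0,∞)`. -/
def NiceOn (f : ℝ → ℝ) (C B : ℝ) : Prop :=
  0 ≤ C ∧ 0 ≤ B ∧ (∀ x, 0 ≤ x → 0 ≤ f x ∧ f x ≤ B) ∧
    ∀ x y, 0 ≤ x → 0 ≤ y → |f x - f y| ≤ C * |x - y|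

lemma nice_congr {f g : ℝ → ℝ} {C B : ℝ} (h : NiceOn f C B)
    (hfg : ∀ x, 0 ≤ x → f x = g x) : NiceOn g C B := by
  obtain ⟨h1, h2, h3, h4⟩ := h
  exact ⟨h1, h2, fun x hx => (hfg x hx) ▸ h3 x hx,
    fun x y hx hy => by rw [← hfg x hx, ← hfg y hy]; exact h4 x y hx hy⟩

lemma nice_rat {c k h : ℝ} (hc : 0 ≤ c) (hk : 0 < k) (hh : 0 < h) :
    NiceOn (fun x => c * x / (k * x + h)) (c / h) (c / k) := by
  refine ⟨by positivity, by positivity, ?_, ?_⟩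
  · intro x hx
    have dx : 0 < k * x + h := by positivity
    constructor
    · positivity
    · rw [div_le_div_iff₀ dx hk]
      nlinarith
  · intro x y hx hy
    have dx : 0 < k * x + h := by positivity
    have dy : 0 < k * y + h := by positivity
    have key : c * x / (k * x + h) - c * y / (k * y + h)
        = c * h * (x - y) / ((k * x + h) * (k * y + h)) := by
      field_simp
      ring
    rw [key, abs_div, abs_of_pos (mul_pos dx dy)]
    have h1 : |c * h * (x - y)| = c * h * |x - y| := by
      rw [abs_mul, abs_of_nonneg (by positivity : (0:ℝ) ≤ c * h)]
    rw [h1, div_le_iff₀ (mul_pos dx dy)]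
    have hhh : h * h ≤ (k * x + h) * (k * y + h) := by
      nlinarith [mul_nonneg hx hy, mul_nonneg hk.le hx, mul_nonneg hk.le hy,
        mul_nonneg (mul_nonneg (mul_nonneg hk.le hk.le) hx) hy,
        mul_nonneg (mul_nonneg hh.le hk.le) hx, mul_nonneg (mul_nonneg hh.le hk.le) hy]
    have : c / h * |x - y| * (h * h) = c * h * |x - y| := by field_simp
    nlinarith [abs_nonneg (x - y), mul_le_mul_of_nonneg_left hhh
      (by positivity : (0:ℝ) ≤ c / h * |x - y|)]

lemma nice_comp {f g : ℝ → ℝ} {C B C' B' : ℝ} (hf : NiceOn f C B) (hg : NiceOn g C' B') :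
    NiceOn (fun x => f (g x)) (C * C') B := by
  obtain ⟨h1, h2, h3, h4⟩ := hf
  obtain ⟨g1, g2, g3, g4⟩ := hg
  refine ⟨by positivity, h2, fun x hx => h3 _ (g3 x hx).1, fun x y hx hy => ?_⟩
  calc |f (g x) - f (g y)| ≤ C * |g x - g y| := h4 _ _ (g3 x hx).1 (g3 y hy).1
    _ ≤ C * (C' * |x - y|) := by
        exact mul_le_mul_of_nonneg_left (g4 x y hx hy) h1
    _ = C * C' * |x - y| := by ring

lemma nice_mul {f g : ℝ → ℝ} {C B C' B' : ℝ} (hf : NiceOn f C B) (hg : NiceOn g C' B') :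
    NiceOn (fun x => f x * g x) (C * B' + C' * B) (B * B') := by
  obtain ⟨h1, h2, h3, h4⟩ := hf
  obtain ⟨g1, g2, g3, g4⟩ := hg
  refine ⟨by positivity, by positivity, fun x hx => ?_, fun x y hx hy => ?_⟩
  · constructor
    · exact mul_nonneg (h3 x hx).1 (g3 x hx).1
    · exact mul_le_mul (h3 x hx).2 (g3 x hx).2 (g3 x hx).1 h2
  · have key : f x * g x - f y * g y = (f x - f y) * g x + f y * (g x - g y) := by ring
    rw [key]
    calc |(f x - f y) * g x + f y * (g x - g y)|
        ≤ |(f x - f y) * g x| + |f y * (g x - g y)| := abs_add_le _ _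
      _ = |f x - f y| * |g x| + |f y| * |g x - g y| := by rw [abs_mul, abs_mul]
      _ ≤ (C * |x - y|) * B' + B * (C' * |x - y|) := by
          have e1 : |g x| ≤ B' := by
            rw [abs_of_nonneg (g3 x hx).1]; exact (g3 x hx).2
          have e2 : |f y| ≤ B := by
            rw [abs_of_nonneg (h3 y hy).1]; exact (h3 y hy).2
          refine add_le_add (mul_le_mul (h4 x y hx hy) e1 (abs_nonneg _) (by positivity))
            (mul_le_mul e2 (g4 x y hx hy) (abs_nonneg _) h2)
      _ = (C * B' +  C' * B) * |x - y| := by ring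

lemma nice_const_mul {f : ℝ → ℝ} {C B : ℝ} (a : ℝ) (ha : 0 ≤ a) (hf : NiceOn f C B) :
    NiceOn (fun x => a * f x) (a * C) (a * B) := by
  obtain ⟨h1, h2, h3, h4⟩ := hf
  refine ⟨by positivity, by positivity, fun x hx => ⟨by have := (h3 x hx).1; positivity,
    mul_le_mul_of_nonneg_left (h3 x hx).2 ha⟩, fun x y hx hy => ?_⟩
  have : a * f x - a * f y = a * (f x - f y) := by ring
  rw [this, abs_mul, abs_of_nonneg ha, mul_assoc]
  exact mul_le_mul_of_nonneg_left (h4 x y hx hy) ha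

lemma nice_add {f g : ℝ → ℝ} {C B C' B' : ℝ} (hf : NiceOn f C B) (hg : NiceOn g C' B') :
    NiceOn (fun x => f x + g x) (C + C') (B + B') := by
  obtain ⟨h1, h2, h3, h4⟩ := hf
  obtain ⟨g1, g2, g3, g4⟩ := hg
  refine ⟨by positivity, by positivity, fun x hx =>
    ⟨add_nonneg (h3 x hx).1 (g3 x hx).1, add_le_add (h3 x hx).2 (g3 x hx).2⟩,
    fun x y hx hy => ?_⟩
  have : f x + g x - (f y + g y) = (f x - f y) + (g x - g y) := by ring
  rw [this]
  calc |f x - f y + (g x - g y)| ≤ |f x - f y| + |g x - g y| := abs_add_le _ _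
    _ ≤ C * |x - y| + C' * |x - y| := add_le_add (h4 x y hx hy) (g4 x y hx hy)
    _ = (C + C') * |x - y| := by ring


/-- One-step propagation of a zero of the (nonpositive) derivative. -/
lemma gronwall_step {u : ℝ → ℝ} {D K δ x₁ : ℝ} (hD : 0 < D) (hK : 0 ≤ K) (hδ : 0 < δ)
    (hKδ : K / D * δ ^ 2 ≤ 1 / 2)
    (hu1 : Differentiable ℝ u) (hu2 : Differentiable ℝ (deriv u))
    (hz0 : deriv u x₁ = 0)
    (hzle : ∀ s ∈ Set.Icc x₁ (x₁ + δ), deriv u s ≤ 0)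
    (key : ∀ s ∈ Set.Icc x₁ (x₁ + δ), -(K / D) * (u x₁ - u s) ≤ deriv (deriv u) s) :
    ∀ s ∈ Set.Icc x₁ (x₁ + δ), deriv u s = 0 := by
  set v : ℝ → ℝ := fun s => -deriv u s with hv
  have hvd : Differentiable ℝ v := hu2.neg
  have hvc : ContinuousOn v (Set.Icc x₁ (x₁ + δ)) := hvd.continuous.continuousOn
  have hne : (Set.Icc x₁ (x₁ + δ)).Nonempty := ⟨x₁, ⟨le_refl _, by linarith⟩⟩
  obtain ⟨xs, hxs, hmax⟩ := isCompact_Icc.exists_isMaxOn hne hvc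
  have hmax' : ∀ y ∈ Set.Icc x₁ (x₁ + δ), v y ≤ v xs := hmax
  set M : ℝ := v xs with hM
  have hM0 : 0 ≤ M := by
    have := hmax' x₁ ⟨le_refl x₁, by linarith⟩
    simp only [hv, hz0, neg_zero] at this
    linarith
  suffices hMz : M ≤ 0 by
    intro s hs
    have h1 : v s ≤ M := hmax' s hs
    have h2 : deriv u s ≤ 0 := hzle s hs
    simp only [hv] at h1
    linarith
  rcases eq_or_lt_of_le hxs.1 with heq | hlt
  · simp only [hM, hv, ← heq, hz0, neg_zero]
    exact le_rfl
  -- x₁ < xs : apply MVT to v on [x₁, xs]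
  obtain ⟨ξ, hξ, hξd⟩ := exists_deriv_eq_slope v hlt
    (hvc.mono (Set.Icc_subset_Icc le_rfl hxs.2))
    (hvd.differentiableOn)
  have hξI : ξ ∈ Set.Icc x₁ (x₁ + δ) := ⟨hξ.1.le, le_trans hξ.2.le hxs.2⟩
  -- deriv v ξ = -(deriv (deriv u)) ξ ≤ (K/D) * (u x₁ - u ξ)
  have hdv : deriv v ξ = -(deriv (deriv u) ξ) := by
    simp only [hv]
    exact deriv.neg
  have h1 : deriv v ξ ≤ K / D * (u x₁ - u ξ) := by
    have := key ξ hξI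
    rw [hdv]; linarith
  -- u x₁ - u ξ ≤ M * δ (MVT for u on [x₁, ξ])
  have h2 : u x₁ - u ξ ≤ M * δ := by
    obtain ⟨ζ, hζ, hζd⟩ := exists_deriv_eq_slope u hξ.1
      (hu1.continuous.continuousOn) (hu1.differentiableOn)
    have hζI : ζ ∈ Set.Icc x₁ (x₁ + δ) := ⟨hζ.1.le, le_trans hζ.2.le hξI.2⟩
    have hvζ : v ζ ≤ M := hmax' ζ hζI
    have hd : ξ - x₁ > 0 := by linarith [hξ.1]
    have e : u ξ - u x₁ = deriv u ζ * (ξ - x₁) := by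
      field_simp at hζd
      linarith [hζd]
    have : u x₁ - u ξ = v ζ * (ξ - x₁) := by simp only [hv]; linarith [e]
    rw [this]
    have hle1 : v ζ * (ξ - x₁) ≤ M * (ξ - x₁) := by
      exact mul_le_mul_of_nonneg_right hvζ hd.le
    have : ξ - x₁ ≤ δ := by linarith [hξI.2]
    nlinarith
  -- slope identity : deriv v ξ = M / (xs - x₁)
  have hslope : deriv v ξ = (M - 0) / (xs - x₁) := by
    rw [hξd]
    simp only [hv, hz0, neg_zero, hM]
  have hdpos : 0 < xs - x₁ := by linarith
  have hMeq : M = deriv v ξ * (xs - x₁) := by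
    rw [hslope]; field_simp; ring
  have hxsd : xs - x₁ ≤ δ := by linarith [hxs.2]
  -- combine
  have hb : deriv v ξ ≤ K / D * (M * δ) := le_trans h1
    (mul_le_mul_of_nonneg_left h2 (by positivity))
  have hcoef : 0 ≤ K / D * (M * δ) :=
    mul_nonneg (div_nonneg hK hD.le) (mul_nonneg hM0 hδ.le)
  have step1 : deriv v ξ * (xs - x₁) ≤ K / D * (M * δ) * (xs - x₁) :=
    mul_le_mul_of_nonneg_right hb hdpos.le
  have step2 : K / D * (M * δ) * (xs - x₁) ≤ K / D * (M * δ) * δ :=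
    mul_le_mul_of_nonneg_left hxsd hcoef
  have hfin : M ≤ K / D * (M * δ) * δ := by nth_rewrite 1 [hMeq]; linarith
  have h3 : K / D * (M * δ) * δ = K / D * δ ^ 2 * M := by ring
  have h4 : K / D * δ ^ 2 * M ≤ 1 / 2 * M := mul_le_mul_of_nonneg_right hKδ hM0
  linarith

/-- `Ppoly` has a Lipschitz-type constant on `[0, ρ₈]`. -/
lemma ppoly_lip (p : Params) (hp : p.Pos) :
    ∃ C : ℝ, 0 ≤ C ∧ ∀ x y : ℝ, x ∈ Set.Icc 0 (p.ρ 7) → y ∈ Set.Icc 0 (p.ρ 7) →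
      |Ppoly p x - Ppoly p y| ≤ C * |x - y| := by
  obtain ⟨hk, hkb6, hkb8, hh, hρ, hD⟩ := hp
  have hρ2 : 0 < p.ρ 2 := hρ 2 (by decide)
  have hρ3 : 0 < p.ρ 3 := hρ 3 (by decide)
  have hρ4 : 0 < p.ρ 4 := hρ 4 (by decide)
  have hρ5 : 0 < p.ρ 5 := hρ 5 (by decide)
  have hρ6 : 0 < p.ρ 6 := hρ 6 (by decide)
  have hρ7 : 0 < p.ρ 7 := hρ 7 (by decide)
  have hk2 := hk 2
  have n3 : NiceOn (phi3 p) _ _ :=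
    nice_congr (nice_rat (mul_nonneg (hk 2).le hρ2.le) (hk 2) (hh 2))
      (fun x _ => rfl)
  have n4 : NiceOn (phi4 p) _ _ :=
    nice_congr (nice_rat (mul_nonneg (hk 3).le hρ3.le) (hk 3) (hh 3))
      (fun x _ => rfl)
  have n7 : NiceOn (phi7 p) _ _ :=
    nice_congr (nice_rat (mul_nonneg (hk 6).le hρ6.le) (hk 6) (hh 6))
      (fun x _ => rfl)
  have n5 : NiceOn (phi5 p) _ _ :=
    nice_congr (nice_comp
      (nice_rat (mul_nonneg (hk 4).le hρ4.le) (hk 4) (hh 4)) n7)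
      (fun x _ => rfl)
  have n2 : NiceOn (phi2 p) _ _ :=
    nice_congr (nice_const_mul (p.k 1 / p.h 1) (div_nonneg (hk 1).le (hh 1).le) (nice_mul n4 n5))
      (fun x _ => rfl)
  have nL : NiceOn (fun T => p.k 5 * phi5 p T + p.kb6 * phi2 p T) _ _ :=
    nice_add (nice_const_mul (p.k 5) (hk 5).le n5) (nice_const_mul p.kb6 hkb6.le n2)
  have n6 : NiceOn (phi6 p) _ _ :=
    nice_congr (nice_comp
      (nice_rat hρ5.le one_pos (hh 5)) nL)
      (fun x _ => by simp only [phi6, one_mul])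
  have n1 : NiceOn (phi1 p) _ _ :=
    nice_congr (nice_const_mul (p.k 0 / p.h 0) (div_nonneg (hk 0).le (hh 0).le) (nice_mul n3 n6))
      (fun x _ => rfl)
  have nQ : NiceOn (fun T => p.k 7 * phi6 p T + p.kb8 * phi1 p T) _ _ :=
    nice_add (nice_const_mul (p.k 7) (hk 7).le n6) (nice_const_mul p.kb8 hkb8.le n1)
  set Q : ℝ → ℝ := fun T => p.k 7 * phi6 p T + p.kb8 * phi1 p T with hQ
  obtain ⟨CQ, BQ, nQ'⟩ : ∃ C B, NiceOn Q C B := ⟨_, _, nQ⟩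
  obtain ⟨hCQ, hBQ, hbd, hlip⟩ := nQ'
  refine ⟨CQ * p.ρ 7 + BQ + p.h 7,
    add_nonneg (add_nonneg (mul_nonneg hCQ hρ7.le) hBQ) (hh 7).le, ?_⟩
  intro x y hx hy
  have e : Ppoly p x - Ppoly p y
      = (Q x - Q y) * (p.ρ 7 - x) + (-(Q y) - p.h 7) * (x - y) := by
    simp only [Ppoly, hQ]; ring
  rw [e]
  have h1 : |(Q x - Q y) * (p.ρ 7 - x)| ≤ CQ * |x - y| * p.ρ 7 := by
    rw [abs_mul]
    have hb1 : |p.ρ 7 - x| ≤ p.ρ 7 := by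
      rw [abs_of_nonneg (by linarith [hx.2])]; linarith [hx.1]
    exact mul_le_mul (hlip x y hx.1 hy.1) hb1 (abs_nonneg _) (by positivity)
  have h2 : |(-(Q y) - p.h 7) * (x - y)| ≤ (BQ + p.h 7) * |x - y| := by
    rw [abs_mul]
    have hb2 : |(-(Q y) - p.h 7)| ≤ BQ + p.h 7 := by
      have := hbd y hy.1
      rw [abs_le]; constructor <;> [linarith [this.2, (hh 7).le]; linarith [this.1, (hh 7).le]]
    exact mul_le_mul_of_nonneg_right hb2 (abs_nonneg _)
  calc |(Q x - Q y) * (p.ρ 7 - x) + (-(Q y) - p.h 7) * (x - y)|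
      ≤ |(Q x - Q y) * (p.ρ 7 - x)| + |(-(Q y) - p.h 7) * (x - y)| := abs_add_le _ _
    _ ≤ CQ * |x - y| * p.ρ 7 + (BQ + p.h 7) * |x - y| := add_le_add h1 h2
    _ = (CQ * p.ρ 7 + BQ + p.h 7) * |x - y| := by ring

/-- A `C^∞` function has a Lipschitz constant on a compact interval. -/
lemma smooth_lip {g : ℝ → ℝ} (hg : ContDiff ℝ (⊤ : ℕ∞) g) (R : ℝ) :
    ∃ C : ℝ, 0 ≤ C ∧ ∀ x y : ℝ, x ∈ Set.Icc 0 R → y ∈ Set.Icc 0 R →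
      |g x - g y| ≤ C * |x - y| := by
  have hd : Continuous (deriv g) := hg.continuous_deriv (by simp)
  obtain ⟨C, hC⟩ := isCompact_Icc.exists_bound_of_continuousOn
    (s := Set.Icc (0:ℝ) R) (hd.continuousOn (f := deriv g))
  refine ⟨max C 0, le_max_right _ _, ?_⟩
  intro x y hx hy
  have key := Convex.norm_image_sub_le_of_norm_deriv_le (𝕜 := ℝ) (f := g)
    (s := Set.Icc (0:ℝ) R) (C := max C 0)
    (fun z _ => (hg.differentiable (by simp)).differentiableAt)
    (fun z hz => le_trans (hC z hz) (le_max_left _ _)) (convex_Icc _ _) hy hx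
  simpa [Real.norm_eq_abs] using key

set_option maxHeartbeats 1000000 in
/-- The quasimonotone/one-sided Lipschitz estimate for `Ftau`. -/
lemma exists_K (p : Params) (hp : p.Pos) {Tb Tm : ℝ} (τ₁ : ℝ)
    (hτ₁ : τ₁ ∈ Set.Ioo (0 : ℝ) 1) (g : ℝ → ℝ) (hg : GoodG Tb Tm g) (τ : ℝ)
    (hτ : τ ∈ Set.Icc (0 : ℝ) 1) (W0 W1 : ℝ) (hW0 : 0 ≤ W0) (hW1 : 0 ≤ W1) (i : Fin 8) :
    ∃ K : ℝ, 0 ≤ K ∧ ∀ a b : Fin 8 → ℝ,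
      (∀ j, 0 ≤ b j) → (∀ j, b j ≤ a j) →
      (∀ j : Fin 8, 2 ≤ (j : ℕ) → a j ≤ p.ρ j) →
      (∀ j : Fin 8, 2 ≤ (j : ℕ) → b j ≤ p.ρ j) →
      a 0 ≤ W0 → a 1 ≤ W1 →
      Ftau p τ₁ g τ b i - Ftau p τ₁ g τ a i ≤ K * (a i - b i) := by
  obtain ⟨hk, hkb6, hkb8, hh, hρ, hD⟩ := hp
  have hρ2 : 0 < p.ρ 2 := hρ 2 (by decide)
  have hρ4 : 0 < p.ρ 4 := hρ 4 (by decide)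
  have hρ5 : 0 < p.ρ 5 := hρ 5 (by decide)
  have hρ6 : 0 < p.ρ 6 := hρ 6 (by decide)
  have hρ7 : 0 < p.ρ 7 := hρ 7 (by decide)
  obtain ⟨CP, hCP0, hCP⟩ := ppoly_lip p ⟨hk, hkb6, hkb8, hh, hρ, hD⟩
  obtain ⟨Cg, hCg0, hCg⟩ := smooth_lip hg.1 (p.ρ 7)
  fin_cases i
  -- i = 0
  · rw [show (⟨0, by norm_num⟩ : Fin 8) = 0 from rfl]
    refine ⟨p.h 0, (hh 0).le, fun a b hb hba haρ hbρ hW0' hW1' => ?_⟩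
    show p.k 0 * b 2 * b 5 - p.h 0 * b 0 - (p.k 0 * a 2 * a 5 - p.h 0 * a 0) ≤ p.h 0 * (a 0 - b 0)
    nlinarith [mul_le_mul_of_nonneg_left
      (mul_le_mul (hba 2) (hba 5) (hb 5) (le_trans (hb 2) (hba 2))) (hk 0).le]
  -- i = 1
  · rw [show (⟨1, by norm_num⟩ : Fin 8) = 1 from rfl]
    refine ⟨p.h 1, (hh 1).le, fun a b hb hba haρ hbρ hW0' hW1' => ?_⟩
    show p.k 1 * b 3 * b 4 - p.h 1 * b 1 - (p.k 1 * a 3 * a 4 - p.h 1 * a 1) ≤ p.h 1 * (a 1 - b 1)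
    nlinarith [mul_le_mul_of_nonneg_left
      (mul_le_mul (hba 3) (hba 4) (hb 4) (le_trans (hb 3) (hba 3))) (hk 1).le]
  -- i = 2
  · rw [show (⟨2, by norm_num⟩ : Fin 8) = 2 from rfl]
    refine ⟨p.k 2 * p.ρ 7 + p.h 2,
      add_nonneg (mul_nonneg (hk 2).le hρ7.le) (hh 2).le,
      fun a b hb hba haρ hbρ hW0' hW1' => ?_⟩
    show p.k 2 * b 7 * (p.ρ 2 - b 2) - p.h 2 * b 2 - (p.k 2 * a 7 * (p.ρ 2 - a 2) - p.h 2 * a 2) ≤ (p.k 2 * p.ρ 7 + p.h 2) * (a 2 - b 2)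
    nlinarith [mul_nonneg (mul_nonneg (hk 2).le (sub_nonneg.2 (hba 7)))
        (sub_nonneg.2 (hbρ 2 (by decide))),
      mul_nonneg (mul_nonneg (hk 2).le (sub_nonneg.2 (haρ 7 (by decide))))
        (sub_nonneg.2 (hba 2))]
  -- i = 3
  · rw [show (⟨3, by norm_num⟩ : Fin 8) = 3 from rfl]
    refine ⟨p.k 3 * p.ρ 7 + p.h 3,
      add_nonneg (mul_nonneg (hk 3).le hρ7.le) (hh 3).le,
      fun a b hb hba haρ hbρ hW0' hW1' => ?_⟩
    show p.k 3 * b 7 * (p.ρ 3 - b 3) - p.h 3 * b 3 - (p.k 3 * a 7 * (p.ρ 3 - a 3) - p.h 3 * a 3) ≤ (p.k 3 * p.ρ 7 + p.h 3) * (a 3 - b 3)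
    nlinarith [mul_nonneg (mul_nonneg (hk 3).le (sub_nonneg.2 (hba 7)))
        (sub_nonneg.2 (hbρ 3 (by decide))),
      mul_nonneg (mul_nonneg (hk 3).le (sub_nonneg.2 (haρ 7 (by decide))))
        (sub_nonneg.2 (hba 3))]
  -- i = 4
  · rw [show (⟨4, by norm_num⟩ : Fin 8) = 4 from rfl]
    refine ⟨p.k 4 * p.ρ 6 + p.h 4,
      add_nonneg (mul_nonneg (hk 4).le hρ6.le) (hh 4).le,
      fun a b hb hba haρ hbρ hW0' hW1' => ?_⟩
    show p.k 4 * b 6 * (p.ρ 4 - b 4) - p.h 4 * b 4 - (p.k 4 * a 6 * (p.ρ 4 - a 4) - p.h 4 * a 4) ≤ (p.k 4 * p.ρ 6 + p.h 4) * (a 4 - b 4)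
    nlinarith [mul_nonneg (mul_nonneg (hk 4).le (sub_nonneg.2 (hba 6)))
        (sub_nonneg.2 (hbρ 4 (by decide))),
      mul_nonneg (mul_nonneg (hk 4).le (sub_nonneg.2 (haρ 6 (by decide))))
        (sub_nonneg.2 (hba 4))]
  -- i = 5
  · rw [show (⟨5, by norm_num⟩ : Fin 8) = 5 from rfl]
    refine ⟨p.k 5 * p.ρ 4 + p.kb6 * W1 + p.h 5,
      add_nonneg (add_nonneg (mul_nonneg (hk 5).le hρ4.le)
        (mul_nonneg hkb6.le hW1)) (hh 5).le,
      fun a b hb hba haρ hbρ hW0' hW1' => ?_⟩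
    show (p.k 5 * b 4 + p.kb6 * b 1) * (p.ρ 5 - b 5) - p.h 5 * b 5 - ((p.k 5 * a 4 + p.kb6 * a 1) * (p.ρ 5 - a 5) - p.h 5 * a 5) ≤ (p.k 5 * p.ρ 4 + p.kb6 * W1 + p.h 5) * (a 5 - b 5)
    nlinarith [mul_nonneg
        (add_nonneg (mul_nonneg (hk 5).le (sub_nonneg.2 (hba 4)))
          (mul_nonneg hkb6.le (sub_nonneg.2 (hba 1))))
        (sub_nonneg.2 (hbρ 5 (by decide))),
      mul_nonneg
        (add_nonneg (mul_nonneg (hk 5).le (sub_nonneg.2 (haρ 4 (by decide))))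
          (mul_nonneg hkb6.le (sub_nonneg.2 hW1')))
        (sub_nonneg.2 (hba 5))]
  -- i = 6
  · rw [show (⟨6, by norm_num⟩ : Fin 8) = 6 from rfl]
    refine ⟨p.k 6 * p.ρ 7 + p.h 6,
      add_nonneg (mul_nonneg (hk 6).le hρ7.le) (hh 6).le,
      fun a b hb hba haρ hbρ hW0' hW1' => ?_⟩
    show p.k 6 * b 7 * (p.ρ 6 - b 6) - p.h 6 * b 6 - (p.k 6 * a 7 * (p.ρ 6 - a 6) - p.h 6 * a 6) ≤ (p.k 6 * p.ρ 7 + p.h 6) * (a 6 - b 6)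
    nlinarith [mul_nonneg (mul_nonneg (hk 6).le (sub_nonneg.2 (hba 7)))
        (sub_nonneg.2 (hbρ 6 (by decide))),
      mul_nonneg (mul_nonneg (hk 6).le (sub_nonneg.2 (haρ 7 (by decide))))
        (sub_nonneg.2 (hba 6))]
  -- i = 7
  · rw [show (⟨7, by norm_num⟩ : Fin 8) = 7 from rfl]
    have hτ₁1 : 0 < 1 - τ₁ := by linarith [hτ₁.2]
    set A : ℝ := 1 / (1 - τ₁) with hA
    have hA1 : 1 ≤ A := by rw [hA, le_div_iff₀ hτ₁1]; nlinarith [hτ₁.1]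
    have hA0 : 0 ≤ A := by linarith
    set C8 : ℝ := p.k 7 * p.ρ 5 + p.kb8 * W0 + p.h 7 with hC8
    have hC80 : 0 ≤ C8 :=
      add_nonneg (add_nonneg (mul_nonneg (hk 7).le hρ5.le)
        (mul_nonneg hkb8.le hW0)) (hh 7).le
    refine ⟨A * (C8 + CP + Cg),
      mul_nonneg hA0 (add_nonneg (add_nonneg hC80 hCP0) hCg0),
      fun a b hb hba haρ hbρ hW0' hW1' => ?_⟩
    set α : ℝ := if τ < τ₁ then 1 else (1 - τ) / (1 - τ₁) with hα
    set β : ℝ := if τ < τ₁ then 0 else (τ - τ₁) / (1 - τ₁) with hβ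
    set γ : ℝ := if τ < τ₁ then τ else τ₁ with hγ
    have hα0 : 0 ≤ α := by
      rw [hα]; split_ifs
      · norm_num
      · apply div_nonneg _ hτ₁1.le; linarith [hτ.2]
    have hαA : α ≤ A := by
      rw [hα, hA]; split_ifs
      · rw [le_div_iff₀ hτ₁1]; nlinarith [hτ₁.1]
      · rw [div_le_div_iff₀ hτ₁1 hτ₁1]; nlinarith [hτ.1, hτ₁1]
    have hβ0 : 0 ≤ β := by
      rw [hβ]; split_ifs with hc
      · norm_num
      · apply div_nonneg _ hτ₁1.le; linarith [not_lt.mp hc]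
    have hβA : β ≤ A := by
      rw [hβ, hA]; split_ifs
      · positivity
      · rw [div_le_div_iff₀ hτ₁1 hτ₁1]; nlinarith [hτ.2, hτ₁.1, hτ₁1]
    have hγ0 : 0 ≤ γ := by
      rw [hγ]; split_ifs
      · exact hτ.1
      · exact hτ₁.1.le
    have hγA : γ ≤ A := by
      rw [hγ]; split_ifs
      · linarith [hτ.2]
      · linarith [hτ₁.2.le]
    have hmem_b : b 7 ∈ Set.Icc 0 (p.ρ 7) := ⟨hb 7, hbρ 7 (by decide)⟩
    have hmem_a : a 7 ∈ Set.Icc 0 (p.ρ 7) := ⟨le_trans (hb 7) (hba 7), haρ 7 (by decide)⟩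
    have hab7 : 0 ≤ a 7 - b 7 := sub_nonneg.2 (hba 7)
    have habs : |b 7 - a 7| = a 7 - b 7 := by rw [abs_sub_comm, abs_of_nonneg hab7]
    have hPd : Ppoly p (b 7) - Ppoly p (a 7) ≤ CP * (a 7 - b 7) := by
      have h1 := hCP (b 7) (a 7) hmem_b hmem_a
      rw [habs] at h1
      exact le_trans (le_abs_self _) h1
    have hgd : g (b 7) - g (a 7) ≤ Cg * (a 7 - b 7) := by
      have h1 := hCg (b 7) (a 7) hmem_b hmem_a
      rw [habs] at h1
      exact le_trans (le_abs_self _) h1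
    have hF : Fvec p b 7 - Fvec p a 7 ≤ C8 * (a 7 - b 7) := by
      show (p.k 7 * b 5 + p.kb8 * b 0) * (p.ρ 7 - b 7) - p.h 7 * b 7
          - ((p.k 7 * a 5 + p.kb8 * a 0) * (p.ρ 7 - a 7) - p.h 7 * a 7)
          ≤ (p.k 7 * p.ρ 5 + p.kb8 * W0 + p.h 7) * (a 7 - b 7)
      nlinarith [mul_nonneg
          (add_nonneg (mul_nonneg (hk 7).le (sub_nonneg.2 (hba 5)))
            (mul_nonneg hkb8.le (sub_nonneg.2 (hba 0))))
          (sub_nonneg.2 (hbρ 7 (by decide))),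
        mul_nonneg
          (add_nonneg (mul_nonneg (hk 7).le (sub_nonneg.2 (haρ 5 (by decide))))
            (mul_nonneg hkb8.le (sub_nonneg.2 hW0')))
          (sub_nonneg.2 (hba 7))]
    have e : Ftau p τ₁ g τ b 7 - Ftau p τ₁ g τ a 7
        = α * (Fvec p b 7 - Fvec p a 7) + β * (Ppoly p (b 7) - Ppoly p (a 7))
          + γ * (g (b 7) - g (a 7)) := by
      have eb : Ftau p τ₁ g τ b 7 = α * Fvec p b 7 + β * Ppoly p (b 7) + γ * g (b 7) := rfl
      have ea : Ftau p τ₁ g τ a 7 = α * Fvec p a 7 + β * Ppoly p (a 7) + γ * g (a 7) := rfl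
      rw [eb, ea]
      ring
    rw [e]
    have t1 : α * (Fvec p b 7 - Fvec p a 7) ≤ A * (C8 * (a 7 - b 7)) :=
      le_trans (mul_le_mul_of_nonneg_left hF hα0)
        (mul_le_mul_of_nonneg_right hαA (mul_nonneg hC80 hab7))
    have t2 : β * (Ppoly p (b 7) - Ppoly p (a 7)) ≤ A * (CP * (a 7 - b 7)) :=
      le_trans (mul_le_mul_of_nonneg_left hPd hβ0)
        (mul_le_mul_of_nonneg_right hβA (mul_nonneg hCP0 hab7))
    have t3 : γ * (g (b 7) - g (a 7)) ≤ A * (Cg * (a 7 - b 7)) :=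
      le_trans (mul_le_mul_of_nonneg_left hgd hγ0)
        (mul_le_mul_of_nonneg_right hγA (mul_nonneg hCg0 hab7))
    have efin : A * (C8 * (a 7 - b 7)) + A * (CP * (a 7 - b 7)) + A * (Cg * (a 7 - b 7))
        = A * (C8 + CP + Cg) * (a 7 - b 7) := by ring
    linarith [t1, t2, t3, efin]

/-- A positive nonincreasing solution of the pulse equations with values in `𝒞` is strictly
decreasing on `(0,∞)` in each component. -/
theorem pulse_strictly_decreasing (p : Params) (hp : p.Pos) (Tb Tm : ℝ)
    (hP : CondP p Tb Tm) (τ₁ : ℝ) (hτ₁ : τ₁ ∈ Set.Ioo (0 : ℝ) 1) (g : ℝ → ℝ)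
    (hg : GoodG Tb Tm g) (τ : ℝ) (hτ : τ ∈ Set.Icc (0 : ℝ) 1)
    (w : ℝ → Fin 8 → ℝ) (hC2 : ∀ i, ContDiff ℝ 2 fun x => w x i)
    (heq : ∀ i : Fin 8, ∀ x : ℝ, 0 ≤ x →
      p.D i * deriv (deriv (fun y => w y i)) x + Ftau p τ₁ g τ (w x) i = 0)
    (hb : ∀ i, deriv (fun y => w y i) 0 = 0)
    (hl : ∀ i, Tendsto (fun x => w x i) atTop (𝓝 0))
    (hpos : ∀ i : Fin 8, ∀ x : ℝ, 0 ≤ x → 0 < w x i)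
    (hmono : ∀ i : Fin 8, ∀ x : ℝ, 0 ≤ x → deriv (fun y => w y i) x ≤ 0)
    (hinC : ∀ x : ℝ, 0 ≤ x → w x ∈ CSet p) :
    ∀ i : Fin 8, ∀ x : ℝ, 0 < x → deriv (fun y => w y i) x < 0 := by
  intro i x hx
  rcases lt_or_eq_of_le (hmono i x hx.le) with h | hz
  · exact h
  exfalso
  -- basic differentiability facts for u := fun y => w y i
  have hu1 : Differentiable ℝ (fun y => w y i) := (hC2 i).differentiable (by norm_num)
  have hu2 : Differentiable ℝ (deriv (fun y => w y i)) := by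
    have h2 : ContDiff ℝ ((1 : ℕ) + 1) (fun y => w y i) := by
      exact_mod_cast hC2 i
    exact (contDiff_succ_iff_deriv.mp h2).2.2.differentiable (by norm_num)
  -- antitonicity of all components on [0, ∞)
  have hanti : ∀ j : Fin 8, AntitoneOn (fun y => w y j) (Set.Ici 0) := by
    intro j
    apply antitoneOn_of_deriv_nonpos (convex_Ici 0)
      (((hC2 j).differentiable (by norm_num)).continuous.continuousOn)
      (((hC2 j).differentiable (by norm_num)).differentiableOn)
    intro y hy
    rw [interior_Ici] at hy
    exact hmono j y (le_of_lt hy)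
  -- bounds
  set W0 : ℝ := w 0 0 with hW0def
  set W1 : ℝ := w 0 1 with hW1def
  have hW0 : 0 ≤ W0 := (hpos 0 0 le_rfl).le
  have hW1 : 0 ≤ W1 := (hpos 1 0 le_rfl).le
  obtain ⟨K, hK0, hK⟩ := exists_K p hp (Tb := Tb) (Tm := Tm) τ₁ hτ₁ g hg τ hτ W0 W1 hW0 hW1 i
  have hDi : 0 < p.D i := hp.2.2.2.2.2 i
  set δ : ℝ := Real.sqrt (p.D i / (2 * (K + 1))) with hδdef
  have hδ : 0 < δ := Real.sqrt_pos.2 (by positivity)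
  have hδsq : δ ^ 2 = p.D i / (2 * (K + 1)) := Real.sq_sqrt (by positivity)
  have hKδ : K / p.D i * δ ^ 2 ≤ 1 / 2 := by
    rw [hδsq]
    have he : K / p.D i * (p.D i / (2 * (K + 1))) = K / (2 * (K + 1)) := by
      field_simp
    rw [he, div_le_div_iff₀ (by positivity) (by norm_num)]
    linarith
  -- key step : propagation of zeros of the derivative
  have step : ∀ x₁ : ℝ, 0 < x₁ → deriv (fun y => w y i) x₁ = 0 →
      ∀ s ∈ Set.Icc x₁ (x₁ + δ), deriv (fun y => w y i) s = 0 := by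
    intro x₁ hx₁ hz₁
    -- F (w x₁) i = 0 since x₁ is an interior maximum of the derivative
    have hloc : IsLocalMax (deriv (fun y => w y i)) x₁ := by
      have hev : ∀ᶠ y in 𝓝 x₁, y ∈ Set.Ioi (0:ℝ) := isOpen_Ioi.eventually_mem hx₁
      filter_upwards [hev] with y hy
      rw [hz₁]
      exact hmono i y (le_of_lt hy)
    have hdd0 : deriv (deriv (fun y => w y i)) x₁ = 0 := hloc.deriv_eq_zero
    have hF0 : Ftau p τ₁ g τ (w x₁) i = 0 := by
      have := heq i x₁ hx₁.le
      rw [hdd0] at this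
      linarith
    apply gronwall_step hDi hK0 hδ hKδ hu1 hu2 hz₁
    · intro s hs
      exact hmono i s (by linarith [hs.1])
    · intro s hs
      have hs0 : (0:ℝ) ≤ s := by linarith [hs.1]
      have hkey : Ftau p τ₁ g τ (w s) i - Ftau p τ₁ g τ (w x₁) i
          ≤ K * (w x₁ i - w s i) := by
        apply hK (w x₁) (w s)
        · exact fun j => (hpos j s hs0).le
        · exact fun j => hanti j (Set.mem_Ici.2 hx₁.le) (Set.mem_Ici.2 hs0) hs.1
        · exact (hinC x₁ hx₁.le).2
        · exact (hinC s hs0).2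
        · exact hanti 0 (Set.mem_Ici.2 le_rfl) (Set.mem_Ici.2 hx₁.le) hx₁.le
        · exact hanti 1 (Set.mem_Ici.2 le_rfl) (Set.mem_Ici.2 hx₁.le) hx₁.le
      rw [hF0, sub_zero] at hkey
      have heqs := heq i s hs0
      -- p.D i * dd s = - Ftau (w s) i ≥ -K * (w x₁ i - w s i)
      have h5 : -(K * ((fun y => w y i) x₁ - (fun y => w y i) s))
          ≤ p.D i * deriv (deriv (fun y => w y i)) s := by
        simp only
        linarith
      have hmul : p.D i * (-(K / p.D i) * ((fun y => w y i) x₁ - (fun y => w y i) s))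
          = -(K * ((fun y => w y i) x₁ - (fun y => w y i) s)) := by
        field_simp
      exact (mul_le_mul_iff_right₀ hDi).mp (le_trans (le_of_eq hmul) h5)
  -- propagate to all of [x, ∞)
  have main : ∀ n : ℕ, ∀ s ∈ Set.Icc x (x + n * δ), deriv (fun y => w y i) s = 0 := by
    intro n
    induction n with
    | zero =>
      intro s hs
      have : s = x := le_antisymm (by simpa using hs.2) hs.1
      rw [this, ← hz]
    | succ n ih =>
      intro s hs
      by_cases hcase : s ≤ x + n * δ
      · exact ih s ⟨hs.1, hcase⟩
      · push_neg at hcase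
        have hx₁ : 0 < x + n * δ := by positivity
        have hz₁ : deriv (fun y => w y i) (x + n * δ) = 0 :=
          ih (x + n * δ) ⟨by nlinarith [hδ.le], le_rfl⟩
        apply step (x + n * δ) hx₁ hz₁ s
        constructor
        · exact hcase.le
        · have : (n:ℝ) + 1 = ((n + 1 : ℕ) : ℝ) := by push_cast; ring
          nlinarith [hs.2]
  have hzero : ∀ s : ℝ, x ≤ s → deriv (fun y => w y i) s = 0 := by
    intro s hxs
    obtain ⟨n, hn⟩ := exists_nat_ge ((s - x) / δ)
    have : s ≤ x + n * δ := by
      rw [div_le_iff₀ hδ] at hn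
      linarith
    exact main n s ⟨hxs, this⟩
  -- w i is constant on [x, ∞)
  have hconst : ∀ s : ℝ, x ≤ s → w s i = w x i := by
    intro s hxs
    rcases eq_or_lt_of_le hxs with he | hlt
    · rw [← he]
    obtain ⟨ζ, hζ, hζd⟩ := exists_deriv_eq_slope (fun y => w y i) hlt
      (hu1.continuous.continuousOn) (hu1.differentiableOn)
    rw [hzero ζ hζ.1.le] at hζd
    have hne : s - x ≠ 0 := by linarith [hlt]
    field_simp at hζd
    linarith [hζd]
  -- contradiction with the limit at ∞
  have hev : (fun s => w s i) =ᶠ[atTop] fun _ => w x i :=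
    eventually_atTop.2 ⟨x, fun s hs => hconst s hs⟩
  have hlim : Tendsto (fun s => w s i) atTop (𝓝 (w x i)) :=
    Tendsto.congr' hev.symm tendsto_const_nhds
  have : w x i = 0 := tendsto_nhds_unique hlim (hl i)
  exact absurd this (ne_of_gt (hpos i x hx.le))

end
end

section
/- There exists η > 0 such that for every τ ∈ [0,1] and every pulse w for F^τ, one has wᵢ(0) > η for every i ∈ {1,…,8}; i.e., pulse solutions are uniformly separated from the trivial solution. -/
open Filter Topology Matrix
open scoped ENNReal

noncomputable section

section AuxSep

open Set

/-! ### Auxiliary calculus lemmas -/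

private lemma aux_deriv_diff {f : ℝ → ℝ} (hf : ContDiff ℝ 2 f) : Differentiable ℝ (deriv f) :=
  (contDiff_succ_iff_deriv.mp (by exact_mod_cast hf : ContDiff ℝ ((1:ℕ)+1) f)).2.2.differentiable (by norm_num)

private lemma quad_upper (f : ℝ → ℝ) (hf : ContDiff ℝ 2 f) (h0 : deriv f 0 = 0) (m : ℝ) :
    ∀ b, ∀ x ∈ Icc (0:ℝ) b, (∀ y ∈ Icc (0:ℝ) b, deriv (deriv f) y ≤ m) →
      f x ≤ f 0 + m * x^2 / 2 := by
  intro b x hx hm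
  have hdf : Differentiable ℝ (deriv f) := aux_deriv_diff hf
  have hdf1 : Differentiable ℝ f := hf.differentiable (by norm_num)
  have step1 : ∀ y ∈ Icc (0:ℝ) b, deriv f y ≤ m * y := by
    have hmono : MonotoneOn (fun y => m * y - deriv f y) (Icc 0 b) := by
      apply monotoneOn_of_deriv_nonneg (convex_Icc 0 b)
      · exact ((continuous_const.mul continuous_id).sub hdf.continuous).continuousOn
      · intro y hy
        exact (((hasDerivAt_id y).const_mul m).sub (hdf y).hasDerivAt).differentiableAt.differentiableWithinAt
      · intro y hy
        rw [interior_Icc] at hy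
        have hd : HasDerivAt (fun y => m * y - deriv f y) (m * 1 - deriv (deriv f) y) y :=
          ((hasDerivAt_id y).const_mul m).sub (hdf y).hasDerivAt
        rw [hd.deriv]
        have := hm y (Ioo_subset_Icc_self hy)
        linarith
    intro y hy
    have := hmono (left_mem_Icc.mpr (hy.1.trans hy.2)) hy hy.1
    simp [h0] at this
    linarith
  have hmono2 : MonotoneOn (fun y => f 0 + m * y^2/2 - f y) (Icc 0 b) := by
    apply monotoneOn_of_deriv_nonneg (convex_Icc 0 b)
    · exact (Continuous.continuousOn (by continuity : Continuous fun y => f 0 + m*y^2/2)).sub hdf1.continuous.continuousOn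
    · intro y hy
      have hd : HasDerivAt (fun y => f 0 + m * y^2/2 - f y) (m * y - deriv f y) y := by
        have h1 : HasDerivAt (fun y : ℝ => f 0 + m * y^2/2) (m * y) y := by
          have : HasDerivAt (fun y : ℝ => y^2) (2*y) y := by
            simpa using (hasDerivAt_pow 2 y)
          have := ((this.const_mul m).div_const 2).const_add (f 0)
          exact this.congr_deriv (by ring)
        exact h1.sub (hdf1 y).hasDerivAt
      exact hd.differentiableAt.differentiableWithinAt
    · intro y hy
      rw [interior_Icc] at hy
      have hd : HasDerivAt (fun y => f 0 + m * y^2/2 - f y) (m * y - deriv f y) y := by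
        have h1 : HasDerivAt (fun y : ℝ => f 0 + m * y^2/2) (m * y) y := by
          have : HasDerivAt (fun y : ℝ => y^2) (2*y) y := by
            simpa using (hasDerivAt_pow 2 y)
          have := ((this.const_mul m).div_const 2).const_add (f 0)
          exact this.congr_deriv (by ring)
        exact h1.sub (hdf1 y).hasDerivAt
      rw [hd.deriv]
      have := step1 y (Ioo_subset_Icc_self hy)
      linarith
  have := hmono2 (left_mem_Icc.mpr (hx.1.trans hx.2)) hx hx.1
  simp at this
  linarith

private lemma quad_lower (f : ℝ → ℝ) (hf : ContDiff ℝ 2 f) (h0 : deriv f 0 = 0) (m : ℝ) :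
    ∀ b, ∀ x ∈ Icc (0:ℝ) b, (∀ y ∈ Icc (0:ℝ) b, m ≤ deriv (deriv f) y) →
      f 0 + m * x^2 / 2 ≤ f x := by
  intro b x hx hm
  have hneg : deriv (fun y => -f y) = fun y => -deriv f y := funext (fun y => deriv.neg)
  have h := quad_upper (fun y => -f y) hf.neg (by rw [hneg]; simp [h0]) (-m) b x hx ?_
  · simp at h; linarith
  · intro y hy
    rw [hneg]
    have : deriv (fun y => -deriv f y) y = -deriv (deriv f) y := deriv.neg
    rw [this]
    linarith [hm y hy]

private lemma sd_nonpos (f : ℝ → ℝ) (hf : ContDiff ℝ 2 f) (h0 : deriv f 0 = 0)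
    (hneg : ∀ x : ℝ, 0 < x → deriv f x < 0) : deriv (deriv f) 0 ≤ 0 := by
  have hdf : Differentiable ℝ (deriv f) := aux_deriv_diff hf
  have hd : HasDerivAt (deriv f) (deriv (deriv f) 0) 0 := (hdf 0).hasDerivAt
  rw [hasDerivAt_iff_tendsto_slope] at hd
  have hd' : Tendsto (slope (deriv f) 0) (𝓝[>] 0) (𝓝 (deriv (deriv f) 0)) :=
    hd.mono_left (nhdsWithin_mono 0 (fun x hx => ne_of_gt hx))
  refine le_of_tendsto hd' ?_
  filter_upwards [self_mem_nhdsWithin] with x hx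
  have hx' : (0:ℝ) < x := hx
  have : slope (deriv f) 0 x = deriv f x / x := by
    simp [slope, h0]; ring
  rw [this]
  exact le_of_lt (div_neg_of_neg_of_pos (hneg x hx') hx')

private lemma pulse_comp (f : ℝ → ℝ) (hf : ContDiff ℝ 2 f) (hlim : Tendsto f atTop (𝓝 0))
    (hneg : ∀ x : ℝ, 0 < x → deriv f x < 0) :
    (∀ x y : ℝ, 0 ≤ x → x ≤ y → f y ≤ f x) ∧ (∀ x : ℝ, 0 ≤ x → 0 < f x) := by
  have hanti : StrictAntiOn f (Ici (0:ℝ)) := by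
    apply strictAntiOn_of_deriv_neg (convex_Ici 0) (hf.continuous.continuousOn)
    intro x hx
    rw [interior_Ici] at hx
    exact hneg x hx
  have hle : ∀ x y : ℝ, 0 ≤ x → x ≤ y → f y ≤ f x := by
    intro x y hx hxy
    rcases eq_or_lt_of_le hxy with rfl | h
    · exact le_refl _
    · exact (hanti hx (hx.trans hxy) h).le
  refine ⟨hle, fun x hx => ?_⟩
  have h1 : 0 ≤ f (x + 1) := by
    refine le_of_tendsto (f := f) hlim ?_
    filter_upwards [eventually_ge_atTop (x+1)] with y hy
    exact hle (x+1) y (by linarith) hy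
  have := hanti hx (by linarith : (0:ℝ) ≤ x + 1) (by linarith)
  linarith

private lemma keyLem (D : ℝ) (hD : 0 < D) (f G : ℝ → ℝ) (hf : ContDiff ℝ 2 f)
    (hode : ∀ x : ℝ, 0 ≤ x → D * deriv (deriv f) x + G x = 0)
    (h0 : deriv f 0 = 0) (hpos : ∀ x : ℝ, 0 ≤ x → 0 < f x)
    (hle : ∀ x y : ℝ, 0 ≤ x → x ≤ y → f y ≤ f x)
    (δ ε c : ℝ) (hδ : 0 < δ) (hc : 0 < c)
    (hsrc : ∀ x ∈ Icc (0:ℝ) δ, f x ≤ ε → c ≤ G x)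
    (hεδ : ε ≤ c * δ^2 / (2*D)) : ε < f 0 := by
  by_contra hcon
  push_neg at hcon
  have hfe : ∀ x ∈ Icc (0:ℝ) δ, f x ≤ ε := fun x hx => (hle 0 x le_rfl hx.1).trans hcon
  have hdd : ∀ x ∈ Icc (0:ℝ) δ, deriv (deriv f) x ≤ -(c/D) := by
    intro x hx
    have h1 := hode x hx.1
    have h2 := hsrc x hx (hfe x hx)
    have : deriv (deriv f) x = -(G x)/D := by field_simp; linarith
    rw [this, neg_div]
    have : c / D ≤ G x / D := by gcongr
    linarith
  have := quad_upper f hf h0 (-(c/D)) δ δ (right_mem_Icc.mpr hδ.le) hdd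
  have hfδ := hpos δ hδ.le
  have hq : c * δ^2/(2*D) = (c/D) * δ^2/2 := by field_simp
  nlinarith [hpos δ hδ.le]

private lemma persistLem (D CC : ℝ) (hD : 0 < D) (f G : ℝ → ℝ) (hf : ContDiff ℝ 2 f)
    (hode : ∀ x : ℝ, 0 ≤ x → D * deriv (deriv f) x + G x = 0)
    (h0 : deriv f 0 = 0) (hC : ∀ x : ℝ, 0 ≤ x → G x ≤ CC) :
    ∀ x : ℝ, 0 ≤ x → f 0 - CC/D * x^2/2 ≤ f x := by
  intro x hx
  have := quad_lower f hf h0 (-(CC/D)) x x (right_mem_Icc.mpr hx) ?_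
  · linarith [this]
  · intro y hy
    have h1 := hode y hy.1
    have h2 := hC y hy.1
    have : deriv (deriv f) y = -(G y)/D := by field_simp; linarith
    rw [this, neg_div]
    have : G y / D ≤ CC / D := by gcongr
    linarith

private lemma persist_half (D CC : ℝ) (hD : 0 < D) (hCC : 0 ≤ CC) (f G : ℝ → ℝ)
    (hf : ContDiff ℝ 2 f)
    (hode : ∀ x : ℝ, 0 ≤ x → D * deriv (deriv f) x + G x = 0)
    (h0 : deriv f 0 = 0) (hG : ∀ x : ℝ, 0 ≤ x → G x ≤ CC)
    (e δ' : ℝ) (he : e ≤ f 0) (hq : CC/D*δ'^2/2 ≤ e/2) :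
    ∀ x ∈ Icc (0:ℝ) δ', e/2 ≤ f x := by
  intro x hx
  have hper := persistLem D CC hD f G hf hode h0 hG x hx.1
  have hsq : x^2 ≤ δ'^2 := pow_le_pow_left₀ hx.1 hx.2 2
  have hDnn : 0 ≤ CC/D := div_nonneg hCC hD.le
  nlinarith [mul_le_mul_of_nonneg_left hsq hDnn]

/-! ### Facts about the functions `φᵢ` and `P` -/

private lemma frac_mono {r h s t : ℝ} (hh : 0 < h) (hr : 0 ≤ r) (hs : 0 ≤ s) (hst : s ≤ t) :
    r * s / (s + h) ≤ r * t / (t + h) := by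
  rw [div_le_div_iff₀ (by linarith) (by linarith)]
  nlinarith [mul_nonneg (mul_nonneg hr (sub_nonneg.mpr hst)) hh.le]

private lemma frac_le {r h s : ℝ} (hh : 0 < h) (hr : 0 ≤ r) (hs : 0 ≤ s) :
    r * s / (s + h) ≤ r := by
  rw [div_le_iff₀ (by linarith)]
  nlinarith

private lemma frac_nonneg {r h s : ℝ} (hh : 0 < h) (hr : 0 ≤ r) (hs : 0 ≤ s) :
    0 ≤ r * s / (s + h) :=
  div_nonneg (mul_nonneg hr hs) (by linarith)

variable {p : Params}

private lemma phi3_eq (T : ℝ) : phi3 p T = p.ρ 2 * (p.k 2 * T) / ((p.k 2 * T) + p.h 2) := by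
  unfold phi3; congr 1; ring
private lemma phi4_eq (T : ℝ) : phi4 p T = p.ρ 3 * (p.k 3 * T) / ((p.k 3 * T) + p.h 3) := by
  unfold phi4; congr 1; ring
private lemma phi7_eq (T : ℝ) : phi7 p T = p.ρ 6 * (p.k 6 * T) / ((p.k 6 * T) + p.h 6) := by
  unfold phi7; congr 1; ring
private lemma phi5_eq (T : ℝ) : phi5 p T = p.ρ 4 * (p.k 4 * phi7 p T) / ((p.k 4 * phi7 p T) + p.h 4) := by
  unfold phi5; congr 1; ring


section withhp
variable (hp : p.Pos)
include hp

private lemma rho_pos (i : Fin 8) (hi : 2 ≤ (i:ℕ)) : 0 < p.ρ i := hp.2.2.2.2.1 i hi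

private lemma phi3_nonneg {T : ℝ} (hT : 0 ≤ T) : 0 ≤ phi3 p T := by
  rw [phi3_eq]
  exact frac_nonneg (hp.2.2.2.1 2) (rho_pos hp 2 (by decide)).le (mul_nonneg (hp.1 2).le hT)
private lemma phi4_nonneg {T : ℝ} (hT : 0 ≤ T) : 0 ≤ phi4 p T := by
  rw [phi4_eq]
  exact frac_nonneg (hp.2.2.2.1 3) (rho_pos hp 3 (by decide)).le (mul_nonneg (hp.1 3).le hT)
private lemma phi7_nonneg {T : ℝ} (hT : 0 ≤ T) : 0 ≤ phi7 p T := by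
  rw [phi7_eq]
  exact frac_nonneg (hp.2.2.2.1 6) (rho_pos hp 6 (by decide)).le (mul_nonneg (hp.1 6).le hT)
private lemma phi5_nonneg {T : ℝ} (hT : 0 ≤ T) : 0 ≤ phi5 p T := by
  rw [phi5_eq]
  exact frac_nonneg (hp.2.2.2.1 4) (rho_pos hp 4 (by decide)).le
    (mul_nonneg (hp.1 4).le (phi7_nonneg hp hT))
private lemma phi2_nonneg {T : ℝ} (hT : 0 ≤ T) : 0 ≤ phi2 p T :=
  mul_nonneg (div_nonneg (hp.1 1).le (hp.2.2.2.1 1).le)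
    (mul_nonneg (phi4_nonneg hp hT) (phi5_nonneg hp hT))
private lemma phi6_nonneg {T : ℝ} (hT : 0 ≤ T) : 0 ≤ phi6 p T := by
  unfold phi6
  exact frac_nonneg (hp.2.2.2.1 5) (rho_pos hp 5 (by decide)).le
    (by nlinarith [phi5_nonneg hp hT, phi2_nonneg hp hT, hp.1 5, hp.2.1])
private lemma phi1_nonneg {T : ℝ} (hT : 0 ≤ T) : 0 ≤ phi1 p T :=
  mul_nonneg (div_nonneg (hp.1 0).le (hp.2.2.2.1 0).le)
    (mul_nonneg (phi3_nonneg hp hT) (phi6_nonneg hp hT))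

private lemma phi3_le {T : ℝ} (hT : 0 ≤ T) : phi3 p T ≤ p.ρ 2 := by
  rw [phi3_eq]
  exact frac_le (hp.2.2.2.1 2) (rho_pos hp 2 (by decide)).le (mul_nonneg (hp.1 2).le hT)
private lemma phi4_le {T : ℝ} (hT : 0 ≤ T) : phi4 p T ≤ p.ρ 3 := by
  rw [phi4_eq]
  exact frac_le (hp.2.2.2.1 3) (rho_pos hp 3 (by decide)).le (mul_nonneg (hp.1 3).le hT)
private lemma phi5_le {T : ℝ} (hT : 0 ≤ T) : phi5 p T ≤ p.ρ 4 := by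
  rw [phi5_eq]
  exact frac_le (hp.2.2.2.1 4) (rho_pos hp 4 (by decide)).le
    (mul_nonneg (hp.1 4).le (phi7_nonneg hp hT))
private lemma phi6_le {T : ℝ} (hT : 0 ≤ T) : phi6 p T ≤ p.ρ 5 := by
  unfold phi6
  exact frac_le (hp.2.2.2.1 5) (rho_pos hp 5 (by decide)).le
    (by nlinarith [phi5_nonneg hp hT, phi2_nonneg hp hT, hp.1 5, hp.2.1])
private lemma phi2_le {T : ℝ} (hT : 0 ≤ T) : phi2 p T ≤ p.k 1 / p.h 1 * (p.ρ 3 * p.ρ 4) := by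
  unfold phi2
  have h1 := phi4_le hp hT; have h2 := phi5_le hp hT
  have h3 := phi4_nonneg hp hT; have h4 := phi5_nonneg hp hT
  have h5 : 0 ≤ p.k 1 / p.h 1 := div_nonneg (hp.1 1).le (hp.2.2.2.1 1).le
  have h6 : phi4 p T * phi5 p T ≤ p.ρ 3 * p.ρ 4 :=
    mul_le_mul h1 h2 h4 (rho_pos hp 3 (by decide)).le
  exact mul_le_mul_of_nonneg_left h6 h5
private lemma phi1_le {T : ℝ} (hT : 0 ≤ T) : phi1 p T ≤ p.k 0 / p.h 0 * (p.ρ 2 * p.ρ 5) := by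
  unfold phi1
  have h1 := phi3_le hp hT; have h2 := phi6_le hp hT
  have h3 := phi3_nonneg hp hT; have h4 := phi6_nonneg hp hT
  have h5 : 0 ≤ p.k 0 / p.h 0 := div_nonneg (hp.1 0).le (hp.2.2.2.1 0).le
  have h6 : phi3 p T * phi6 p T ≤ p.ρ 2 * p.ρ 5 :=
    mul_le_mul h1 h2 h4 (rho_pos hp 2 (by decide)).le
  exact mul_le_mul_of_nonneg_left h6 h5

omit hp in
private lemma Ppoly_zero : Ppoly p 0 = 0 := by
  have h3 : phi3 p 0 = 0 := by unfold phi3; simp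
  have h7 : phi7 p 0 = 0 := by unfold phi7; simp
  have h5 : phi5 p 0 = 0 := by unfold phi5; rw [h7]; simp
  have h4 : phi4 p 0 = 0 := by unfold phi4; simp
  have h2 : phi2 p 0 = 0 := by unfold phi2; rw [h4]; simp
  have h6 : phi6 p 0 = 0 := by unfold phi6; rw [h5, h2]; simp
  have h1 : phi1 p 0 = 0 := by unfold phi1; rw [h3]; simp
  unfold Ppoly; rw [h6, h1]; simp

private lemma Ppoly_neg_high {T : ℝ} (hT : p.ρ 7 ≤ T) : Ppoly p T < 0 := by
  unfold Ppoly
  have hT7 : 0 < p.ρ 7 := rho_pos hp 7 (by decide)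
  have hT0 : (0:ℝ) ≤ T := hT7.le.trans hT
  have h1 := phi6_nonneg hp hT0
  have h2 := phi1_nonneg hp hT0
  have h3 := hp.1 7
  have h4 := hp.2.2.1
  have h5 := hp.2.2.2.1 7
  nlinarith [mul_nonneg (add_nonneg (mul_nonneg h3.le h1) (mul_nonneg h4.le h2))
    (sub_nonneg.mpr hT), mul_pos h5 (hT7.trans_le hT)]

private lemma Tm_lt_rho7 {Tb Tm : ℝ} (hP : CondP p Tb Tm) : Tm < p.ρ 7 := by
  by_contra hcon
  push_neg at hcon
  have hTm0 : (0:ℝ) ≤ Tm := by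
    have := hP.1; have := hP.2.1; linarith
  have hz : Ppoly p Tm = 0 := (hP.2.2.1 Tm hTm0).mpr (Or.inr (Or.inr rfl))
  have := Ppoly_neg_high hp hcon
  linarith

private lemma Ppoly_contOn : ContinuousOn (Ppoly p) (Ici 0) := by
  have hc3 : ContinuousOn (phi3 p) (Ici 0) := by
    apply ContinuousOn.div (by fun_prop) (by fun_prop)
    intro x hx
    have h1 := hp.1 2; have h2 := hp.2.2.2.1 2
    have h3 : (0:ℝ) ≤ x := hx
    positivity
  have hc4 : ContinuousOn (phi4 p) (Ici 0) := by
    apply ContinuousOn.div (by fun_prop) (by fun_prop)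
    intro x hx
    have h1 := hp.1 3; have h2 := hp.2.2.2.1 3
    have h3 : (0:ℝ) ≤ x := hx
    positivity
  have hc7 : ContinuousOn (phi7 p) (Ici 0) := by
    apply ContinuousOn.div (by fun_prop) (by fun_prop)
    intro x hx
    have h1 := hp.1 6; have h2 := hp.2.2.2.1 6
    have h3 : (0:ℝ) ≤ x := hx
    positivity
  have hc5 : ContinuousOn (phi5 p) (Ici 0) := by
    apply ContinuousOn.div ((continuousOn_const.mul hc7)) ((continuousOn_const.mul hc7).add continuousOn_const)
    intro x hx
    have h1 := phi7_nonneg hp (mem_Ici.mp hx)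
    have h2 := hp.1 4; have h3 := hp.2.2.2.1 4
    show p.k 4 * phi7 p x + p.h 4 ≠ 0
    nlinarith
  have hc2 : ContinuousOn (phi2 p) (Ici 0) := continuousOn_const.mul (hc4.mul hc5)
  have hc6 : ContinuousOn (phi6 p) (Ici 0) := by
    apply ContinuousOn.div
      (continuousOn_const.mul ((continuousOn_const.mul hc5).add (continuousOn_const.mul hc2)))
      (((continuousOn_const.mul hc5).add (continuousOn_const.mul hc2)).add continuousOn_const)
    intro x hx
    have h1 := phi5_nonneg hp (mem_Ici.mp hx)
    have h2 := phi2_nonneg hp (mem_Ici.mp hx)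
    have h3 := hp.1 5; have h4 := hp.2.2.2.1 5; have h5 := hp.2.1
    show p.k 5 * phi5 p x + p.kb6 * phi2 p x + p.h 5 ≠ 0
    nlinarith
  have hc1 : ContinuousOn (phi1 p) (Ici 0) := continuousOn_const.mul (hc3.mul hc6)
  unfold Ppoly
  exact (((continuousOn_const.mul hc6).add (continuousOn_const.mul hc1)).mul
    (continuousOn_const.sub (continuous_id.continuousOn))).sub
    (continuousOn_const.mul (continuous_id.continuousOn))

private lemma Ppoly_neg_low {Tb Tm : ℝ} (hP : CondP p Tb Tm) {T : ℝ} (hT : T ∈ Ioo 0 Tb) :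
    Ppoly p T < 0 := by
  obtain ⟨hTb, hTbm, hiff, hd0, hx1, hx2⟩ := hP
  by_contra hcon
  push_neg at hcon
  have hne : Ppoly p T ≠ 0 := by
    intro h
    rcases (hiff T hT.1.le).mp h with h | h | h
    · exact absurd h (ne_of_gt hT.1)
    · exact absurd h (ne_of_lt hT.2)
    · exact absurd h (ne_of_lt (hT.2.trans hTbm))
  have hpos : 0 < Ppoly p T := lt_of_le_of_ne hcon (Ne.symm hne)
  have hdiff : DifferentiableAt ℝ (Ppoly p) 0 := by
    by_contra h
    rw [deriv_zero_of_not_differentiableAt h] at hd0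
    exact lt_irrefl 0 hd0
  have hslope : Tendsto (slope (Ppoly p) 0) (𝓝[>] 0) (𝓝 (deriv (Ppoly p) 0)) :=
    ((hasDerivAt_iff_tendsto_slope.mp hdiff.hasDerivAt).mono_left
      (nhdsWithin_mono 0 (fun x hx => ne_of_gt hx)))
  have hev : ∀ᶠ t in 𝓝[>] (0:ℝ), slope (Ppoly p) 0 t < 0 :=
    hslope.eventually_lt_const hd0
  have hev2 : ∀ᶠ t in 𝓝[>] (0:ℝ), t ∈ Ioo 0 T :=
    eventually_of_mem (Ioo_mem_nhdsGT_of_mem ⟨le_refl 0, hT.1⟩) (fun t ht => ht)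
  obtain ⟨t, hts, htT⟩ := (hev.and hev2).exists
  have hPt : Ppoly p t < 0 := by
    have hs : slope (Ppoly p) 0 t = Ppoly p t / t := by
      simp [slope, Ppoly_zero (p := p)]; ring
    rw [hs] at hts
    by_contra hcon2
    push_neg at hcon2
    exact absurd (div_nonneg hcon2 htT.1.le) (not_le.mpr hts)
  have hIVT := intermediate_value_Ioo htT.2.le
    ((Ppoly_contOn hp).mono (fun y hy => le_trans htT.1.le hy.1))
  have h0mem : (0:ℝ) ∈ Ioo (Ppoly p t) (Ppoly p T) := ⟨hPt, hpos⟩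
  obtain ⟨z, hz, hPz⟩ := hIVT h0mem
  have hz0 : 0 < z := htT.1.trans hz.1
  have hzb : z < Tb := hz.2.trans hT.2
  rcases (hiff z hz0.le).mp hPz with h | h | h
  · exact absurd h (ne_of_gt hz0)
  · exact absurd h (ne_of_lt hzb)
  · exact absurd h (ne_of_lt (hzb.trans hTbm))

private lemma Ppoly_abs {T Mb : ℝ} (hT : 0 ≤ T) (hTM : T ≤ Mb) :
    |Ppoly p T| ≤ (p.k 7 * p.ρ 5 + p.kb8 * (p.k 0 / p.h 0 * (p.ρ 2 * p.ρ 5))) * (p.ρ 7 + Mb)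
      + p.h 7 * Mb := by
  have hρ7 : 0 < p.ρ 7 := rho_pos hp 7 (by decide)
  have hMb : 0 ≤ Mb := hT.trans hTM
  have h6a := phi6_nonneg hp hT
  have h6b := phi6_le hp hT
  have h1a := phi1_nonneg hp hT
  have h1b := phi1_le hp hT
  have hk7 := hp.1 7
  have hkb8 := hp.2.1.le
  have hkb8' := hp.2.2.1
  have hh7 := hp.2.2.2.1 7
  set c := p.k 7 * phi6 p T + p.kb8 * phi1 p T with hcdef
  set cm := p.k 7 * p.ρ 5 + p.kb8 * (p.k 0 / p.h 0 * (p.ρ 2 * p.ρ 5)) with hcmdef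
  have hc0 : 0 ≤ c := add_nonneg (mul_nonneg hk7.le h6a) (mul_nonneg hkb8'.le h1a)
  have hccm : c ≤ cm := add_le_add (mul_le_mul_of_nonneg_left h6b hk7.le)
    (mul_le_mul_of_nonneg_left h1b hkb8'.le)
  have hr1 : p.ρ 7 - T ≤ p.ρ 7 + Mb := by linarith
  have hr2 : -(p.ρ 7 + Mb) ≤ p.ρ 7 - T := by linarith
  have hX : 0 ≤ p.ρ 7 + Mb := by linarith
  have p1 : c * (p.ρ 7 - T) ≤ c * (p.ρ 7 + Mb) := mul_le_mul_of_nonneg_left hr1 hc0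
  have p2 : c * (p.ρ 7 + Mb) ≤ cm * (p.ρ 7 + Mb) := mul_le_mul_of_nonneg_right hccm hX
  have p3 : c * (-(p.ρ 7 + Mb)) ≤ c * (p.ρ 7 - T) := mul_le_mul_of_nonneg_left hr2 hc0
  have p4 : c * (-(p.ρ 7 + Mb)) = -(c * (p.ρ 7 + Mb)) := by ring
  have ph1 : 0 ≤ p.h 7 * T := mul_nonneg hh7.le hT
  have ph2 : p.h 7 * T ≤ p.h 7 * Mb := mul_le_mul_of_nonneg_left hTM hh7.le
  have : Ppoly p T = c * (p.ρ 7 - T) - p.h 7 * T := by rw [hcdef]; rfl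
  rw [this, abs_le]
  constructor
  · nlinarith
  · nlinarith

end withhp
end AuxSep

set_option maxHeartbeats 4000000

/-- Pulses are uniformly separated from the trivial solution: there is `η > 0` with
`wᵢ(0) > η` for every pulse `w` for `F^τ`, `τ ∈ [0,1]`, and every component `i`. -/
theorem pulses_separated_from_zero (p : Params) (hp : p.Pos) (Tb Tm : ℝ)
    (hP : CondP p Tb Tm) (τ₁ : ℝ) (hτ₁ : τ₁ ∈ Set.Ioo (0 : ℝ) 1) (g : ℝ → ℝ)
    (hg : GoodG Tb Tm g) :
    ∃ η : ℝ, 0 < η ∧ ∀ τ ∈ Set.Icc (0 : ℝ) 1, ∀ w : ℝ → Fin 8 → ℝ,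
      IsPulse p (Ftau p τ₁ g τ) w → ∀ i : Fin 8, η < w 0 i := by
  have hP' := hP
  have hk := hp.1
  have hkb6 : 0 < p.kb6 := hp.2.1
  have hkb8 : 0 < p.kb8 := hp.2.2.1
  have hh := hp.2.2.2.1
  have hDp := hp.2.2.2.2.2
  have hρ2 : 0 < p.ρ 2 := rho_pos hp 2 (by decide)
  have hρ3 : 0 < p.ρ 3 := rho_pos hp 3 (by decide)
  have hρ4 : 0 < p.ρ 4 := rho_pos hp 4 (by decide)
  have hρ5 : 0 < p.ρ 5 := rho_pos hp 5 (by decide)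
  have hρ6 : 0 < p.ρ 6 := rho_pos hp 6 (by decide)
  have hρ7 : 0 < p.ρ 7 := rho_pos hp 7 (by decide)
  have hTb : 0 < Tb := hP.1
  have hTbm : Tb < Tm := hP.2.1
  have hTm7 : Tm < p.ρ 7 := Tm_lt_rho7 hp hP
  have hτa : 0 < τ₁ := hτ₁.1
  have hτb : τ₁ < 1 := hτ₁.2
  -- bound for g
  obtain ⟨Cg, hCg0, hCgb⟩ : ∃ CC : ℝ, 0 ≤ CC ∧ ∀ t, |g t| ≤ CC := by
    have hK : HasCompactSupport g :=
      Metric.isCompact_of_isClosed_isBounded (isClosed_tsupport g)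
        ((Metric.isBounded_Ioo Tb Tm).subset hg.2.2)
    obtain ⟨CC, hCC⟩ := hK.exists_bound_of_continuous hg.1.continuous
    exact ⟨|CC|, abs_nonneg CC, fun t => (hCC t).trans (le_abs_self CC)⟩
  have hgz : ∀ t : ℝ, t ∉ Set.Ioo Tb Tm → g t = 0 :=
    fun t ht => image_eq_zero_of_notMem_tsupport (fun hmem => ht (hg.2.2 hmem))
  -- global bounds
  obtain ⟨K1, hK1def⟩ : ∃ x : ℝ, x = p.k 0 / p.h 0 * (p.ρ 2 * p.ρ 5) := ⟨_, rfl⟩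
  obtain ⟨K2, hK2def⟩ : ∃ x : ℝ, x = p.k 1 / p.h 1 * (p.ρ 3 * p.ρ 4) := ⟨_, rfl⟩
  have hK1_0 : 0 ≤ K1 := by rw [hK1def]; exact mul_nonneg (div_nonneg (hk 0).le (hh 0).le) (mul_nonneg hρ2.le hρ5.le)
  have hK2_0 : 0 ≤ K2 := by rw [hK2def]; exact mul_nonneg (div_nonneg (hk 1).le (hh 1).le) (mul_nonneg hρ3.le hρ4.le)
  obtain ⟨M, hMdef⟩ : ∃ x : ℝ, x = 1 + p.ρ 2 + p.ρ 3 + p.ρ 4 + p.ρ 5 + p.ρ 6 + p.ρ 7 + K1 + K2 := ⟨_, rfl⟩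
  have hM0 : 0 < M := by rw [hMdef]; linarith
  -- summands of C
  obtain ⟨S0, hS0def⟩ : ∃ x : ℝ, x = p.k 0 * M * M + p.h 0 * M := ⟨_, rfl⟩
  obtain ⟨S1, hS1def⟩ : ∃ x : ℝ, x = p.k 1 * M * M + p.h 1 * M := ⟨_, rfl⟩
  obtain ⟨S2, hS2def⟩ : ∃ x : ℝ, x = p.k 2 * M * (p.ρ 2 + M) + p.h 2 * M := ⟨_, rfl⟩
  obtain ⟨S3, hS3def⟩ : ∃ x : ℝ, x = p.k 3 * M * (p.ρ 3 + M) + p.h 3 * M := ⟨_, rfl⟩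
  obtain ⟨S4, hS4def⟩ : ∃ x : ℝ, x = p.k 4 * M * (p.ρ 4 + M) + p.h 4 * M := ⟨_, rfl⟩
  obtain ⟨S5, hS5def⟩ : ∃ x : ℝ, x = (p.k 5 * M + p.kb6 * M) * (p.ρ 5 + M) + p.h 5 * M := ⟨_, rfl⟩
  obtain ⟨S6, hS6def⟩ : ∃ x : ℝ, x = p.k 6 * M * (p.ρ 6 + M) + p.h 6 * M := ⟨_, rfl⟩
  obtain ⟨S7, hS7def⟩ : ∃ x : ℝ, x = (p.k 7 * M + p.kb8 * M) * (p.ρ 7 + M) + p.h 7 * M := ⟨_, rfl⟩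
  obtain ⟨CP, hCPdef⟩ : ∃ x : ℝ, x = (p.k 7 * p.ρ 5 + p.kb8 * K1) * (p.ρ 7 + M) + p.h 7 * M := ⟨_, rfl⟩
  have hS0n : 0 ≤ S0 := by
    rw [hS0def]
    linarith [mul_nonneg (mul_nonneg (hk 0).le hM0.le) hM0.le, mul_nonneg (hh 0).le hM0.le]
  have hS1n : 0 ≤ S1 := by
    rw [hS1def]
    linarith [mul_nonneg (mul_nonneg (hk 1).le hM0.le) hM0.le, mul_nonneg (hh 1).le hM0.le]
  have hS2n : 0 ≤ S2 := by
    rw [hS2def]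
    linarith [mul_nonneg (mul_nonneg (hk 2).le hM0.le) (by linarith : (0:ℝ) ≤ p.ρ 2 + M), mul_nonneg (hh 2).le hM0.le]
  have hS3n : 0 ≤ S3 := by
    rw [hS3def]
    linarith [mul_nonneg (mul_nonneg (hk 3).le hM0.le) (by linarith : (0:ℝ) ≤ p.ρ 3 + M), mul_nonneg (hh 3).le hM0.le]
  have hS4n : 0 ≤ S4 := by
    rw [hS4def]
    linarith [mul_nonneg (mul_nonneg (hk 4).le hM0.le) (by linarith : (0:ℝ) ≤ p.ρ 4 + M), mul_nonneg (hh 4).le hM0.le]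
  have hS5n : 0 ≤ S5 := by
    rw [hS5def]
    have h2 : (0:ℝ) ≤ p.k 5 * M + p.kb6 * M :=
      add_nonneg (mul_nonneg (hk 5).le hM0.le) (mul_nonneg hkb6.le hM0.le)
    linarith [mul_nonneg h2 (by linarith : (0:ℝ) ≤ p.ρ 5 + M), mul_nonneg (hh 5).le hM0.le]
  have hS6n : 0 ≤ S6 := by
    rw [hS6def]
    linarith [mul_nonneg (mul_nonneg (hk 6).le hM0.le) (by linarith : (0:ℝ) ≤ p.ρ 6 + M), mul_nonneg (hh 6).le hM0.le]
  have hS7n : 0 ≤ S7 := by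
    rw [hS7def]
    have h2 : (0:ℝ) ≤ p.k 7 * M + p.kb8 * M :=
      add_nonneg (mul_nonneg (hk 7).le hM0.le) (mul_nonneg hkb8.le hM0.le)
    linarith [mul_nonneg h2 (by linarith : (0:ℝ) ≤ p.ρ 7 + M), mul_nonneg (hh 7).le hM0.le]
  have hCPn : 0 ≤ CP := by
    rw [hCPdef]
    have h2 : (0:ℝ) ≤ p.k 7 * p.ρ 5 + p.kb8 * K1 :=
      add_nonneg (mul_nonneg (hk 7).le hρ5.le) (mul_nonneg hkb8.le hK1_0)
    linarith [mul_nonneg h2 (by linarith : (0:ℝ) ≤ p.ρ 7 + M), mul_nonneg (hh 7).le hM0.le]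
  obtain ⟨C, hCdef⟩ : ∃ x : ℝ, x = 1 + S0 + S1 + S2 + S3 + S4 + S5 + S6 + S7 + CP + Cg := ⟨_, rfl⟩
  have hC0 : 0 < C := by rw [hCdef]; linarith
  -- stage constants
  obtain ⟨δ0, hδ0def⟩ : ∃ x : ℝ, x = Real.sqrt (Tb * p.D 7 / C) := ⟨_, rfl⟩
  have hδ0pos : 0 < δ0 := by rw [hδ0def]; exact Real.sqrt_pos.mpr (div_pos (mul_pos hTb (hDp 7)) hC0)
  have hδ0sq : δ0^2 = Tb * p.D 7 / C := by
    rw [hδ0def]; exact Real.sq_sqrt (le_of_lt (div_pos (mul_pos hTb (hDp 7)) hC0))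
  obtain ⟨c2, hc2def⟩ : ∃ x : ℝ, x = p.k 2 * Tb * p.ρ 2 / 8 := ⟨_, rfl⟩
  have hc2pos : 0 < c2 := by rw [hc2def]; exact div_pos (mul_pos (mul_pos (hk 2) hTb) hρ2) (by norm_num)
  obtain ⟨eA, heAdef⟩ : ∃ x : ℝ, x = min (min (p.ρ 2 / 2) (c2 / p.h 2)) (c2 * δ0^2 / (2 * p.D 2)) := ⟨_, rfl⟩
  have heApos : 0 < eA := by
    rw [heAdef]
    exact lt_min (lt_min (half_pos hρ2) (div_pos hc2pos (hh 2)))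
      (div_pos (mul_pos hc2pos (pow_pos hδ0pos 2)) (by linarith [hDp 2]))
  obtain ⟨c3, hc3def⟩ : ∃ x : ℝ, x = p.k 3 * Tb * p.ρ 3 / 8 := ⟨_, rfl⟩
  have hc3pos : 0 < c3 := by rw [hc3def]; exact div_pos (mul_pos (mul_pos (hk 3) hTb) hρ3) (by norm_num)
  obtain ⟨eB, heBdef⟩ : ∃ x : ℝ, x = min (min (p.ρ 3 / 2) (c3 / p.h 3)) (c3 * δ0^2 / (2 * p.D 3)) := ⟨_, rfl⟩
  have heBpos : 0 < eB := by
    rw [heBdef]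
    exact lt_min (lt_min (half_pos hρ3) (div_pos hc3pos (hh 3)))
      (div_pos (mul_pos hc3pos (pow_pos hδ0pos 2)) (by linarith [hDp 3]))
  obtain ⟨c6, hc6def⟩ : ∃ x : ℝ, x = p.k 6 * Tb * p.ρ 6 / 8 := ⟨_, rfl⟩
  have hc6pos : 0 < c6 := by rw [hc6def]; exact div_pos (mul_pos (mul_pos (hk 6) hTb) hρ6) (by norm_num)
  obtain ⟨eC, heCdef⟩ : ∃ x : ℝ, x = min (min (p.ρ 6 / 2) (c6 / p.h 6)) (c6 * δ0^2 / (2 * p.D 6)) := ⟨_, rfl⟩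
  have heCpos : 0 < eC := by
    rw [heCdef]
    exact lt_min (lt_min (half_pos hρ6) (div_pos hc6pos (hh 6)))
      (div_pos (mul_pos hc6pos (pow_pos hδ0pos 2)) (by linarith [hDp 6]))
  obtain ⟨δ1, hδ1def⟩ : ∃ x : ℝ, x = min δ0 (Real.sqrt (eC * p.D 6 / C)) := ⟨_, rfl⟩
  have hδ1pos : 0 < δ1 := by rw [hδ1def]; exact lt_min hδ0pos (Real.sqrt_pos.mpr (div_pos (mul_pos heCpos (hDp 6)) hC0))
  have hδ10 : δ1 ≤ δ0 := by rw [hδ1def]; exact min_le_left _ _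
  have hδ1sq : δ1^2 ≤ eC * p.D 6 / C := by
    have h1 : δ1 ≤ Real.sqrt (eC * p.D 6 / C) := by rw [hδ1def]; exact min_le_right _ _
    have h2 := pow_le_pow_left₀ hδ1pos.le h1 2
    rwa [Real.sq_sqrt (div_nonneg (mul_nonneg heCpos.le (hDp 6).le) hC0.le)] at h2
  obtain ⟨c4, hc4def⟩ : ∃ x : ℝ, x = p.k 4 * (eC / 2) * p.ρ 4 / 4 := ⟨_, rfl⟩
  have hc4pos : 0 < c4 := by rw [hc4def]; exact div_pos (mul_pos (mul_pos (hk 4) (half_pos heCpos)) hρ4) (by norm_num)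
  obtain ⟨eD, heDdef⟩ : ∃ x : ℝ, x = min (min (p.ρ 4 / 2) (c4 / p.h 4)) (c4 * δ1^2 / (2 * p.D 4)) := ⟨_, rfl⟩
  have heDpos : 0 < eD := by
    rw [heDdef]
    exact lt_min (lt_min (half_pos hρ4) (div_pos hc4pos (hh 4)))
      (div_pos (mul_pos hc4pos (pow_pos hδ1pos 2)) (by linarith [hDp 4]))
  obtain ⟨δ2, hδ2def⟩ : ∃ x : ℝ, x = min δ1 (Real.sqrt (eD * p.D 4 / C)) := ⟨_, rfl⟩
  have hδ2pos : 0 < δ2 := by rw [hδ2def]; exact lt_min hδ1pos (Real.sqrt_pos.mpr (div_pos (mul_pos heDpos (hDp 4)) hC0))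
  have hδ21 : δ2 ≤ δ1 := by rw [hδ2def]; exact min_le_left _ _
  have hδ2sq : δ2^2 ≤ eD * p.D 4 / C := by
    have h1 : δ2 ≤ Real.sqrt (eD * p.D 4 / C) := by rw [hδ2def]; exact min_le_right _ _
    have h2 := pow_le_pow_left₀ hδ2pos.le h1 2
    rwa [Real.sq_sqrt (div_nonneg (mul_nonneg heDpos.le (hDp 4).le) hC0.le)] at h2
  obtain ⟨c5, hc5def⟩ : ∃ x : ℝ, x = p.k 5 * (eD / 2) * p.ρ 5 / 4 := ⟨_, rfl⟩
  have hc5pos : 0 < c5 := by rw [hc5def]; exact div_pos (mul_pos (mul_pos (hk 5) (half_pos heDpos)) hρ5) (by norm_num)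
  obtain ⟨eE, heEdef⟩ : ∃ x : ℝ, x = min (min (p.ρ 5 / 2) (c5 / p.h 5)) (c5 * δ2^2 / (2 * p.D 5)) := ⟨_, rfl⟩
  have heEpos : 0 < eE := by
    rw [heEdef]
    exact lt_min (lt_min (half_pos hρ5) (div_pos hc5pos (hh 5)))
      (div_pos (mul_pos hc5pos (pow_pos hδ2pos 2)) (by linarith [hDp 5]))
  obtain ⟨δ3, hδ3def⟩ : ∃ x : ℝ, x = min (min δ2 (Real.sqrt (eE * p.D 5 / C)))
    (min (Real.sqrt (eB * p.D 3 / C)) (Real.sqrt (eA * p.D 2 / C))) := ⟨_, rfl⟩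
  have hδ3pos : 0 < δ3 := by
    rw [hδ3def]
    exact lt_min (lt_min hδ2pos (Real.sqrt_pos.mpr (div_pos (mul_pos heEpos (hDp 5)) hC0)))
      (lt_min (Real.sqrt_pos.mpr (div_pos (mul_pos heBpos (hDp 3)) hC0))
        (Real.sqrt_pos.mpr (div_pos (mul_pos heApos (hDp 2)) hC0)))
  have hδ32 : δ3 ≤ δ2 := by rw [hδ3def]; exact (min_le_left _ _).trans (min_le_left _ _)
  have hδ3sqE : δ3^2 ≤ eE * p.D 5 / C := by
    have h1 : δ3 ≤ Real.sqrt (eE * p.D 5 / C) := by rw [hδ3def]; exact (min_le_left _ _).trans (min_le_right _ _)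
    have h2 := pow_le_pow_left₀ hδ3pos.le h1 2
    rwa [Real.sq_sqrt (div_nonneg (mul_nonneg heEpos.le (hDp 5).le) hC0.le)] at h2
  have hδ3sqB : δ3^2 ≤ eB * p.D 3 / C := by
    have h1 : δ3 ≤ Real.sqrt (eB * p.D 3 / C) := by rw [hδ3def]; exact (min_le_right _ _).trans (min_le_left _ _)
    have h2 := pow_le_pow_left₀ hδ3pos.le h1 2
    rwa [Real.sq_sqrt (div_nonneg (mul_nonneg heBpos.le (hDp 3).le) hC0.le)] at h2
  have hδ3sqA : δ3^2 ≤ eA * p.D 2 / C := by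
    have h1 : δ3 ≤ Real.sqrt (eA * p.D 2 / C) := by rw [hδ3def]; exact (min_le_right _ _).trans (min_le_right _ _)
    have h2 := pow_le_pow_left₀ hδ3pos.le h1 2
    rwa [Real.sq_sqrt (div_nonneg (mul_nonneg heApos.le (hDp 2).le) hC0.le)] at h2
  obtain ⟨c1, hc1def⟩ : ∃ x : ℝ, x = p.k 1 * (eB / 2) * (eD / 2) / 2 := ⟨_, rfl⟩
  have hc1pos : 0 < c1 := by rw [hc1def]; exact div_pos (mul_pos (mul_pos (hk 1) (half_pos heBpos)) (half_pos heDpos)) (by norm_num)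
  obtain ⟨eF, heFdef⟩ : ∃ x : ℝ, x = min (c1 / p.h 1) (c1 * δ3^2 / (2 * p.D 1)) := ⟨_, rfl⟩
  have heFpos : 0 < eF := by rw [heFdef]; exact lt_min (div_pos hc1pos (hh 1)) (div_pos (mul_pos hc1pos (pow_pos hδ3pos 2)) (by linarith [hDp 1]))
  obtain ⟨c0, hc0def⟩ : ∃ x : ℝ, x = p.k 0 * (eA / 2) * (eE / 2) / 2 := ⟨_, rfl⟩
  have hc0pos : 0 < c0 := by rw [hc0def]; exact div_pos (mul_pos (mul_pos (hk 0) (half_pos heApos)) (half_pos heEpos)) (by norm_num)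
  obtain ⟨eH, heHdef⟩ : ∃ x : ℝ, x = min (c0 / p.h 0) (c0 * δ3^2 / (2 * p.D 0)) := ⟨_, rfl⟩
  have heHpos : 0 < eH := by rw [heHdef]; exact lt_min (div_pos hc0pos (hh 0)) (div_pos (mul_pos hc0pos (pow_pos hδ3pos 2)) (by linarith [hDp 0]))
  obtain ⟨em, hemdef⟩ : ∃ x : ℝ, x = min (min (min Tb eA) (min eB eC)) (min (min eD eE) (min eF eH)) := ⟨_, rfl⟩
  have hempos : 0 < em := by
    rw [hemdef]
    exact lt_min (lt_min (lt_min hTb heApos) (lt_min heBpos heCpos))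
      (lt_min (lt_min heDpos heEpos) (lt_min heFpos heHpos))
  have hemTb : em ≤ Tb := by rw [hemdef]; exact (min_le_left _ _).trans ((min_le_left _ _).trans (min_le_left _ _))
  have hemA : em ≤ eA := by rw [hemdef]; exact (min_le_left _ _).trans ((min_le_left _ _).trans (min_le_right _ _))
  have hemB : em ≤ eB := by rw [hemdef]; exact (min_le_left _ _).trans ((min_le_right _ _).trans (min_le_left _ _))
  have hemC : em ≤ eC := by rw [hemdef]; exact (min_le_left _ _).trans ((min_le_right _ _).trans (min_le_right _ _))
  have hemD : em ≤ eD := by rw [hemdef]; exact (min_le_right _ _).trans ((min_le_left _ _).trans (min_le_left _ _))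
  have hemE : em ≤ eE := by rw [hemdef]; exact (min_le_right _ _).trans ((min_le_left _ _).trans (min_le_right _ _))
  have hemF : em ≤ eF := by rw [hemdef]; exact (min_le_right _ _).trans ((min_le_right _ _).trans (min_le_left _ _))
  have hemH : em ≤ eH := by rw [hemdef]; exact (min_le_right _ _).trans ((min_le_right _ _).trans (min_le_right _ _))
  refine ⟨em / 2, half_pos hempos, ?_⟩
  intro τ hτ w hw
  -- homotopy coefficients
  obtain ⟨A, hAdef⟩ : ∃ x : ℝ, x = if τ < τ₁ then (1:ℝ) else (1 - τ) / (1 - τ₁) := ⟨_, rfl⟩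
  obtain ⟨B, hBdef⟩ : ∃ x : ℝ, x = if τ < τ₁ then (0:ℝ) else (τ - τ₁) / (1 - τ₁) := ⟨_, rfl⟩
  obtain ⟨G0, hG0def⟩ : ∃ x : ℝ, x = if τ < τ₁ then τ else τ₁ := ⟨_, rfl⟩
  have hττ : 1 - τ₁ > 0 := by linarith
  have hA0 : 0 ≤ A := by
    rw [hAdef]; split_ifs
    · norm_num
    · exact div_nonneg (by linarith [hτ.2]) hττ.le
  have hA1 : A ≤ 1 := by
    rw [hAdef]; split_ifs with hsp
    · exact le_refl 1
    · rw [div_le_one hττ]; linarith [not_lt.mp hsp]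
  have hB0 : 0 ≤ B := by
    rw [hBdef]; split_ifs with hsp
    · norm_num
    · exact div_nonneg (by linarith [not_lt.mp hsp]) hττ.le
  have hB1 : B ≤ 1 := by
    rw [hBdef]; split_ifs with hsp
    · norm_num
    · rw [div_le_one hττ]; linarith [hτ.2]
  have hG00 : 0 ≤ G0 := by
    rw [hG0def]; split_ifs
    · exact hτ.1
    · exact hτa.le
  have hG01 : G0 ≤ 1 := by
    rw [hG0def]; split_ifs
    · exact hτ.2
    · exact hτb.le
  have hAB : A + B = 1 := by
    rw [hAdef, hBdef]; split_ifs
    · norm_num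
    · rw [← add_div, div_eq_one_iff_eq (ne_of_gt hττ)]; ring
  have hFt7 : ∀ v : Fin 8 → ℝ,
      Ftau p τ₁ g τ v 7 = A * Fvec p v 7 + B * Ppoly p (v 7) + G0 * g (v 7) := by
    intro v
    show (if (7:Fin 8) = 7 then _ else _) = _
    rw [if_pos rfl, ← hAdef, ← hBdef, ← hG0def]
  have hFtne : ∀ (v : Fin 8 → ℝ) (i : Fin 8), (i:ℕ) < 7 → Ftau p τ₁ g τ v i = Fvec p v i := by
    intro v i hi
    show (if i = 7 then _ else _) = _
    rw [if_neg]
    intro h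
    rw [h] at hi
    exact absurd hi (by decide)
  -- pulse structure
  obtain ⟨hC2, hODE, hd0w, hlim, hnegw⟩ := hw
  have hmono : ∀ i : Fin 8, ∀ x y : ℝ, 0 ≤ x → x ≤ y → w y i ≤ w x i :=
    fun i => (pulse_comp _ (hC2 i) (hlim i) (hnegw i)).1
  have hposw : ∀ i : Fin 8, ∀ x : ℝ, 0 ≤ x → 0 < w x i :=
    fun i => (pulse_comp _ (hC2 i) (hlim i) (hnegw i)).2
  have hF0 : ∀ i : Fin 8, 0 ≤ Ftau p τ₁ g τ (w 0) i := by
    intro i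
    have hsd := sd_nonpos (fun x => w x i) (hC2 i) (hd0w i) (hnegw i)
    have hode := hODE i 0 le_rfl
    linarith [mul_nonneg (hDp i).le (neg_nonneg.mpr hsd)]
  -- upper bounds at 0
  have hub2 : w 0 2 ≤ p.ρ 2 := by
    have h := hF0 2
    rw [hFtne _ 2 (by decide)] at h
    have he : Fvec p (w 0) 2 = p.k 2 * w 0 7 * (p.ρ 2 - w 0 2) - p.h 2 * w 0 2 := rfl
    rw [he] at h
    by_contra hcon
    push_neg at hcon
    have h1 : p.k 2 * w 0 7 * (p.ρ 2 - w 0 2) < 0 :=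
      mul_neg_of_pos_of_neg (mul_pos (hk 2) (hposw 7 0 le_rfl)) (by linarith)
    linarith [mul_pos (hh 2) (hposw 2 0 le_rfl)]
  have hub3 : w 0 3 ≤ p.ρ 3 := by
    have h := hF0 3
    rw [hFtne _ 3 (by decide)] at h
    have he : Fvec p (w 0) 3 = p.k 3 * w 0 7 * (p.ρ 3 - w 0 3) - p.h 3 * w 0 3 := rfl
    rw [he] at h
    by_contra hcon
    push_neg at hcon
    have h1 : p.k 3 * w 0 7 * (p.ρ 3 - w 0 3) < 0 :=
      mul_neg_of_pos_of_neg (mul_pos (hk 3) (hposw 7 0 le_rfl)) (by linarith)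
    linarith [mul_pos (hh 3) (hposw 3 0 le_rfl)]
  have hub4 : w 0 4 ≤ p.ρ 4 := by
    have h := hF0 4
    rw [hFtne _ 4 (by decide)] at h
    have he : Fvec p (w 0) 4 = p.k 4 * w 0 6 * (p.ρ 4 - w 0 4) - p.h 4 * w 0 4 := rfl
    rw [he] at h
    by_contra hcon
    push_neg at hcon
    have h1 : p.k 4 * w 0 6 * (p.ρ 4 - w 0 4) < 0 :=
      mul_neg_of_pos_of_neg (mul_pos (hk 4) (hposw 6 0 le_rfl)) (by linarith)
    linarith [mul_pos (hh 4) (hposw 4 0 le_rfl)]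
  have hub5 : w 0 5 ≤ p.ρ 5 := by
    have h := hF0 5
    rw [hFtne _ 5 (by decide)] at h
    have he : Fvec p (w 0) 5 =
        (p.k 5 * w 0 4 + p.kb6 * w 0 1) * (p.ρ 5 - w 0 5) - p.h 5 * w 0 5 := rfl
    rw [he] at h
    by_contra hcon
    push_neg at hcon
    have hS : 0 < p.k 5 * w 0 4 + p.kb6 * w 0 1 :=
      add_pos (mul_pos (hk 5) (hposw 4 0 le_rfl)) (mul_pos hkb6 (hposw 1 0 le_rfl))
    have h1 : (p.k 5 * w 0 4 + p.kb6 * w 0 1) * (p.ρ 5 - w 0 5) < 0 :=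
      mul_neg_of_pos_of_neg hS (by linarith)
    linarith [mul_pos (hh 5) (hposw 5 0 le_rfl)]
  have hub6 : w 0 6 ≤ p.ρ 6 := by
    have h := hF0 6
    rw [hFtne _ 6 (by decide)] at h
    have he : Fvec p (w 0) 6 = p.k 6 * w 0 7 * (p.ρ 6 - w 0 6) - p.h 6 * w 0 6 := rfl
    rw [he] at h
    by_contra hcon
    push_neg at hcon
    have h1 : p.k 6 * w 0 7 * (p.ρ 6 - w 0 6) < 0 :=
      mul_neg_of_pos_of_neg (mul_pos (hk 6) (hposw 7 0 le_rfl)) (by linarith)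
    linarith [mul_pos (hh 6) (hposw 6 0 le_rfl)]
  have hub7 : w 0 7 ≤ p.ρ 7 := by
    by_contra hcon
    push_neg at hcon
    have h := hF0 7
    rw [hFt7] at h
    have hT0 : 0 < w 0 7 := hposw 7 0 le_rfl
    have hcoefnn : 0 ≤ p.k 7 * w 0 5 + p.kb8 * w 0 0 :=
      add_nonneg (mul_nonneg (hk 7).le (hposw 5 0 le_rfl).le)
        (mul_nonneg hkb8.le (hposw 0 0 le_rfl).le)
    have hF7le : Fvec p (w 0) 7 ≤ -(p.h 7 * w 0 7) := by
      have he : Fvec p (w 0) 7 =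
          (p.k 7 * w 0 5 + p.kb8 * w 0 0) * (p.ρ 7 - w 0 7) - p.h 7 * w 0 7 := rfl
      rw [he]
      linarith [mul_nonneg hcoefnn (by linarith : (0:ℝ) ≤ w 0 7 - p.ρ 7)]
    have hPle : Ppoly p (w 0 7) ≤ -(p.h 7 * w 0 7) := by
      unfold Ppoly
      have h6a := phi6_nonneg hp hT0.le
      have h1a := phi1_nonneg hp hT0.le
      have hcnn : 0 ≤ p.k 7 * phi6 p (w 0 7) + p.kb8 * phi1 p (w 0 7) :=
        add_nonneg (mul_nonneg (hk 7).le h6a) (mul_nonneg hkb8.le h1a)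
      linarith [mul_nonneg hcnn (by linarith : (0:ℝ) ≤ w 0 7 - p.ρ 7)]
    have hg0 : g (w 0 7) = 0 := hgz _ (fun hmem => absurd hmem.2 (by push_neg; linarith))
    rw [hg0, mul_zero, add_zero] at h
    have h1 := mul_le_mul_of_nonneg_left hF7le hA0
    have h2 := mul_le_mul_of_nonneg_left hPle hB0
    have hsum : A * -(p.h 7 * w 0 7) + B * -(p.h 7 * w 0 7) = -(p.h 7 * w 0 7) := by
      rw [← add_mul, hAB, one_mul]
    have h3 : 0 < p.h 7 * w 0 7 := mul_pos (hh 7) hT0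
    linarith
  have hub0 : w 0 0 ≤ K1 := by
    have h := hF0 0
    rw [hFtne _ 0 (by decide)] at h
    have he : Fvec p (w 0) 0 = p.k 0 * w 0 2 * w 0 5 - p.h 0 * w 0 0 := rfl
    rw [he] at h
    rw [hK1def, div_mul_eq_mul_div, le_div_iff₀ (hh 0)]
    have hprod : w 0 2 * w 0 5 ≤ p.ρ 2 * p.ρ 5 :=
      mul_le_mul hub2 hub5 (hposw 5 0 le_rfl).le hρ2.le
    linarith [mul_le_mul_of_nonneg_left hprod (hk 0).le]
  have hub1 : w 0 1 ≤ K2 := by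
    have h := hF0 1
    rw [hFtne _ 1 (by decide)] at h
    have he : Fvec p (w 0) 1 = p.k 1 * w 0 3 * w 0 4 - p.h 1 * w 0 1 := rfl
    rw [he] at h
    rw [hK2def, div_mul_eq_mul_div, le_div_iff₀ (hh 1)]
    have hprod : w 0 3 * w 0 4 ≤ p.ρ 3 * p.ρ 4 :=
      mul_le_mul hub3 hub4 (hposw 4 0 le_rfl).le hρ3.le
    linarith [mul_le_mul_of_nonneg_left hprod (hk 1).le]
  -- global bound M
  have hW : ∀ x : ℝ, 0 ≤ x → ∀ i : Fin 8, 0 ≤ w x i ∧ w x i ≤ M := by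
    intro x hx i
    refine ⟨(hposw i x hx).le, le_trans (hmono i 0 x le_rfl hx) ?_⟩
    fin_cases i
    · exact le_trans hub0 (by rw [hMdef]; linarith)
    · exact le_trans hub1 (by rw [hMdef]; linarith)
    · exact le_trans hub2 (by rw [hMdef]; linarith)
    · exact le_trans hub3 (by rw [hMdef]; linarith)
    · exact le_trans hub4 (by rw [hMdef]; linarith)
    · exact le_trans hub5 (by rw [hMdef]; linarith)
    · exact le_trans hub6 (by rw [hMdef]; linarith)
    · exact le_trans hub7 (by rw [hMdef]; linarith)
  -- uniform bound on the reaction terms along the pulse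
  have hCge : ∀ i : Fin 8, ∀ x : ℝ, 0 ≤ x → |Ftau p τ₁ g τ (w x) i| ≤ C := by
    intro i x hx
    have hv := hW x hx
    have hMn := hM0.le
    have hprod25 : w x 2 * w x 5 ≤ M * M := mul_le_mul (hv 2).2 (hv 5).2 (hv 5).1 hMn
    have hprod34 : w x 3 * w x 4 ≤ M * M := mul_le_mul (hv 3).2 (hv 4).2 (hv 4).1 hMn
    have hCex : S0 + S1 + S2 + S3 + S4 + S5 + S6 + S7 + CP + Cg < C := by
      rw [hCdef]; linarith
    fin_cases i
    · -- i = 0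
      show |Ftau p τ₁ g τ (w x) 0| ≤ C
      rw [hFtne _ 0 (by decide)]
      have he : Fvec p (w x) 0 = p.k 0 * w x 2 * w x 5 - p.h 0 * w x 0 := rfl
      rw [he, abs_le]
      have b1 : p.k 0 * w x 2 * w x 5 ≤ p.k 0 * (M * M) := by
        rw [mul_assoc]; exact mul_le_mul_of_nonneg_left hprod25 (hk 0).le
      have b2 : 0 ≤ p.k 0 * w x 2 * w x 5 :=
        mul_nonneg (mul_nonneg (hk 0).le (hv 2).1) (hv 5).1
      have b3 : 0 ≤ p.h 0 * w x 0 := mul_nonneg (hh 0).le (hv 0).1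
      have b4 : p.h 0 * w x 0 ≤ p.h 0 * M := mul_le_mul_of_nonneg_left (hv 0).2 (hh 0).le
      have hS : S0 = p.k 0 * M * M + p.h 0 * M := hS0def
      constructor <;> [linarith; linarith]
    · -- i = 1
      show |Ftau p τ₁ g τ (w x) 1| ≤ C
      rw [hFtne _ 1 (by decide)]
      have he : Fvec p (w x) 1 = p.k 1 * w x 3 * w x 4 - p.h 1 * w x 1 := rfl
      rw [he, abs_le]
      have b1 : p.k 1 * w x 3 * w x 4 ≤ p.k 1 * (M * M) := by
        rw [mul_assoc]; exact mul_le_mul_of_nonneg_left hprod34 (hk 1).le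
      have b2 : 0 ≤ p.k 1 * w x 3 * w x 4 :=
        mul_nonneg (mul_nonneg (hk 1).le (hv 3).1) (hv 4).1
      have b3 : 0 ≤ p.h 1 * w x 1 := mul_nonneg (hh 1).le (hv 1).1
      have b4 : p.h 1 * w x 1 ≤ p.h 1 * M := mul_le_mul_of_nonneg_left (hv 1).2 (hh 1).le
      have hS : S1 = p.k 1 * M * M + p.h 1 * M := hS1def
      constructor <;> [linarith; linarith]
    · -- i = 2
      show |Ftau p τ₁ g τ (w x) 2| ≤ C
      rw [hFtne _ 2 (by decide)]
      have he : Fvec p (w x) 2 = p.k 2 * w x 7 * (p.ρ 2 - w x 2) - p.h 2 * w x 2 := rfl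
      rw [he, abs_le]
      have hcnn : 0 ≤ p.k 2 * w x 7 := mul_nonneg (hk 2).le (hv 7).1
      have hcle : p.k 2 * w x 7 ≤ p.k 2 * M := mul_le_mul_of_nonneg_left (hv 7).2 (hk 2).le
      have hr1 : p.ρ 2 - w x 2 ≤ p.ρ 2 + M := by linarith [(hv 2).1]
      have hr2 : -(p.ρ 2 + M) ≤ p.ρ 2 - w x 2 := by linarith [(hv 2).2, hρ2.le]
      have hX : (0:ℝ) ≤ p.ρ 2 + M := by linarith
      have p1 := mul_le_mul_of_nonneg_left hr1 hcnn
      have p2 := mul_le_mul_of_nonneg_right hcle hX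
      have p3 := mul_le_mul_of_nonneg_left hr2 hcnn
      have b3 : 0 ≤ p.h 2 * w x 2 := mul_nonneg (hh 2).le (hv 2).1
      have b4 : p.h 2 * w x 2 ≤ p.h 2 * M := mul_le_mul_of_nonneg_left (hv 2).2 (hh 2).le
      have hS : S2 = p.k 2 * M * (p.ρ 2 + M) + p.h 2 * M := hS2def
      constructor <;> [linarith; linarith]
    · -- i = 3
      show |Ftau p τ₁ g τ (w x) 3| ≤ C
      rw [hFtne _ 3 (by decide)]
      have he : Fvec p (w x) 3 = p.k 3 * w x 7 * (p.ρ 3 - w x 3) - p.h 3 * w x 3 := rfl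
      rw [he, abs_le]
      have hcnn : 0 ≤ p.k 3 * w x 7 := mul_nonneg (hk 3).le (hv 7).1
      have hcle : p.k 3 * w x 7 ≤ p.k 3 * M := mul_le_mul_of_nonneg_left (hv 7).2 (hk 3).le
      have hr1 : p.ρ 3 - w x 3 ≤ p.ρ 3 + M := by linarith [(hv 3).1]
      have hr2 : -(p.ρ 3 + M) ≤ p.ρ 3 - w x 3 := by linarith [(hv 3).2, hρ3.le]
      have hX : (0:ℝ) ≤ p.ρ 3 + M := by linarith
      have p1 := mul_le_mul_of_nonneg_left hr1 hcnn
      have p2 := mul_le_mul_of_nonneg_right hcle hX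
      have p3 := mul_le_mul_of_nonneg_left hr2 hcnn
      have b3 : 0 ≤ p.h 3 * w x 3 := mul_nonneg (hh 3).le (hv 3).1
      have b4 : p.h 3 * w x 3 ≤ p.h 3 * M := mul_le_mul_of_nonneg_left (hv 3).2 (hh 3).le
      have hS : S3 = p.k 3 * M * (p.ρ 3 + M) + p.h 3 * M := hS3def
      constructor <;> [linarith; linarith]
    · -- i = 4
      show |Ftau p τ₁ g τ (w x) 4| ≤ C
      rw [hFtne _ 4 (by decide)]
      have he : Fvec p (w x) 4 = p.k 4 * w x 6 * (p.ρ 4 - w x 4) - p.h 4 * w x 4 := rfl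
      rw [he, abs_le]
      have hcnn : 0 ≤ p.k 4 * w x 6 := mul_nonneg (hk 4).le (hv 6).1
      have hcle : p.k 4 * w x 6 ≤ p.k 4 * M := mul_le_mul_of_nonneg_left (hv 6).2 (hk 4).le
      have hr1 : p.ρ 4 - w x 4 ≤ p.ρ 4 + M := by linarith [(hv 4).1]
      have hr2 : -(p.ρ 4 + M) ≤ p.ρ 4 - w x 4 := by linarith [(hv 4).2, hρ4.le]
      have hX : (0:ℝ) ≤ p.ρ 4 + M := by linarith
      have p1 := mul_le_mul_of_nonneg_left hr1 hcnn
      have p2 := mul_le_mul_of_nonneg_right hcle hX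
      have p3 := mul_le_mul_of_nonneg_left hr2 hcnn
      have b3 : 0 ≤ p.h 4 * w x 4 := mul_nonneg (hh 4).le (hv 4).1
      have b4 : p.h 4 * w x 4 ≤ p.h 4 * M := mul_le_mul_of_nonneg_left (hv 4).2 (hh 4).le
      have hS : S4 = p.k 4 * M * (p.ρ 4 + M) + p.h 4 * M := hS4def
      constructor <;> [linarith; linarith]
    · -- i = 5
      show |Ftau p τ₁ g τ (w x) 5| ≤ C
      rw [hFtne _ 5 (by decide)]
      have he : Fvec p (w x) 5 =
          (p.k 5 * w x 4 + p.kb6 * w x 1) * (p.ρ 5 - w x 5) - p.h 5 * w x 5 := rfl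
      rw [he, abs_le]
      have hcnn : 0 ≤ p.k 5 * w x 4 + p.kb6 * w x 1 :=
        add_nonneg (mul_nonneg (hk 5).le (hv 4).1) (mul_nonneg hkb6.le (hv 1).1)
      have hcle : p.k 5 * w x 4 + p.kb6 * w x 1 ≤ p.k 5 * M + p.kb6 * M :=
        add_le_add (mul_le_mul_of_nonneg_left (hv 4).2 (hk 5).le)
          (mul_le_mul_of_nonneg_left (hv 1).2 hkb6.le)
      have hr1 : p.ρ 5 - w x 5 ≤ p.ρ 5 + M := by linarith [(hv 5).1]
      have hr2 : -(p.ρ 5 + M) ≤ p.ρ 5 - w x 5 := by linarith [(hv 5).2, hρ5.le]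
      have hX : (0:ℝ) ≤ p.ρ 5 + M := by linarith
      have p1 := mul_le_mul_of_nonneg_left hr1 hcnn
      have p2 := mul_le_mul_of_nonneg_right hcle hX
      have p3 := mul_le_mul_of_nonneg_left hr2 hcnn
      have b3 : 0 ≤ p.h 5 * w x 5 := mul_nonneg (hh 5).le (hv 5).1
      have b4 : p.h 5 * w x 5 ≤ p.h 5 * M := mul_le_mul_of_nonneg_left (hv 5).2 (hh 5).le
      have hS : S5 = (p.k 5 * M + p.kb6 * M) * (p.ρ 5 + M) + p.h 5 * M := hS5def
      constructor <;> [linarith; linarith]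
    · -- i = 6
      show |Ftau p τ₁ g τ (w x) 6| ≤ C
      rw [hFtne _ 6 (by decide)]
      have he : Fvec p (w x) 6 = p.k 6 * w x 7 * (p.ρ 6 - w x 6) - p.h 6 * w x 6 := rfl
      rw [he, abs_le]
      have hcnn : 0 ≤ p.k 6 * w x 7 := mul_nonneg (hk 6).le (hv 7).1
      have hcle : p.k 6 * w x 7 ≤ p.k 6 * M := mul_le_mul_of_nonneg_left (hv 7).2 (hk 6).le
      have hr1 : p.ρ 6 - w x 6 ≤ p.ρ 6 + M := by linarith [(hv 6).1]
      have hr2 : -(p.ρ 6 + M) ≤ p.ρ 6 - w x 6 := by linarith [(hv 6).2, hρ6.le]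
      have hX : (0:ℝ) ≤ p.ρ 6 + M := by linarith
      have p1 := mul_le_mul_of_nonneg_left hr1 hcnn
      have p2 := mul_le_mul_of_nonneg_right hcle hX
      have p3 := mul_le_mul_of_nonneg_left hr2 hcnn
      have b3 : 0 ≤ p.h 6 * w x 6 := mul_nonneg (hh 6).le (hv 6).1
      have b4 : p.h 6 * w x 6 ≤ p.h 6 * M := mul_le_mul_of_nonneg_left (hv 6).2 (hh 6).le
      have hS : S6 = p.k 6 * M * (p.ρ 6 + M) + p.h 6 * M := hS6def
      constructor <;> [linarith; linarith]
    · -- i = 7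
      show |Ftau p τ₁ g τ (w x) 7| ≤ C
      rw [hFt7]
      have hF7abs : |Fvec p (w x) 7| ≤ S7 := by
        have he : Fvec p (w x) 7 =
            (p.k 7 * w x 5 + p.kb8 * w x 0) * (p.ρ 7 - w x 7) - p.h 7 * w x 7 := rfl
        rw [he, abs_le]
        have hcnn : 0 ≤ p.k 7 * w x 5 + p.kb8 * w x 0 :=
          add_nonneg (mul_nonneg (hk 7).le (hv 5).1) (mul_nonneg hkb8.le (hv 0).1)
        have hcle : p.k 7 * w x 5 + p.kb8 * w x 0 ≤ p.k 7 * M + p.kb8 * M :=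
          add_le_add (mul_le_mul_of_nonneg_left (hv 5).2 (hk 7).le)
            (mul_le_mul_of_nonneg_left (hv 0).2 hkb8.le)
        have hr1 : p.ρ 7 - w x 7 ≤ p.ρ 7 + M := by linarith [(hv 7).1]
        have hr2 : -(p.ρ 7 + M) ≤ p.ρ 7 - w x 7 := by linarith [(hv 7).2, hρ7.le]
        have hX : (0:ℝ) ≤ p.ρ 7 + M := by linarith
        have p1 := mul_le_mul_of_nonneg_left hr1 hcnn
        have p2 := mul_le_mul_of_nonneg_right hcle hX
        have p3 := mul_le_mul_of_nonneg_left hr2 hcnn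
        have b3 : 0 ≤ p.h 7 * w x 7 := mul_nonneg (hh 7).le (hv 7).1
        have b4 : p.h 7 * w x 7 ≤ p.h 7 * M := mul_le_mul_of_nonneg_left (hv 7).2 (hh 7).le
        have hS : S7 = (p.k 7 * M + p.kb8 * M) * (p.ρ 7 + M) + p.h 7 * M := hS7def
        constructor <;> [linarith; linarith]
      have hPabs : |Ppoly p (w x 7)| ≤ CP := by
        rw [hCPdef, hK1def]
        exact Ppoly_abs hp (hv 7).1 (hv 7).2
      have hgabs : |g (w x 7)| ≤ Cg := hCgb _
      have t1 : |A * Fvec p (w x) 7| ≤ |Fvec p (w x) 7| := by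
        rw [abs_mul, abs_of_nonneg hA0]
        exact mul_le_of_le_one_left (abs_nonneg _) hA1
      have t2 : |B * Ppoly p (w x 7)| ≤ |Ppoly p (w x 7)| := by
        rw [abs_mul, abs_of_nonneg hB0]
        exact mul_le_of_le_one_left (abs_nonneg _) hB1
      have t3 : |G0 * g (w x 7)| ≤ |g (w x 7)| := by
        rw [abs_mul, abs_of_nonneg hG00]
        exact mul_le_of_le_one_left (abs_nonneg _) hG01
      calc |A * Fvec p (w x) 7 + B * Ppoly p (w x 7) + G0 * g (w x 7)|
          ≤ |A * Fvec p (w x) 7 + B * Ppoly p (w x 7)| + |G0 * g (w x 7)| := abs_add_le _ _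
        _ ≤ |A * Fvec p (w x) 7| + |B * Ppoly p (w x 7)| + |G0 * g (w x 7)| := by
            linarith [abs_add_le (A * Fvec p (w x) 7) (B * Ppoly p (w x 7))]
        _ ≤ C := by linarith
  -- the thrombin component starts above Tb
  have hTbw : Tb ≤ w 0 7 := by
    by_contra hcon
    push_neg at hcon
    have hT0 : 0 < w 0 7 := hposw 7 0 le_rfl
    have hTnn := hT0.le
    have hb3 : w 0 2 ≤ phi3 p (w 0 7) := by
      have h := hF0 2
      rw [hFtne _ 2 (by decide)] at h
      have he : Fvec p (w 0) 2 = p.k 2 * w 0 7 * (p.ρ 2 - w 0 2) - p.h 2 * w 0 2 := rfl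
      rw [he] at h
      unfold phi3
      rw [le_div_iff₀ (by linarith [mul_pos (hk 2) hT0, hh 2])]
      linarith
    have hb4 : w 0 3 ≤ phi4 p (w 0 7) := by
      have h := hF0 3
      rw [hFtne _ 3 (by decide)] at h
      have he : Fvec p (w 0) 3 = p.k 3 * w 0 7 * (p.ρ 3 - w 0 3) - p.h 3 * w 0 3 := rfl
      rw [he] at h
      unfold phi4
      rw [le_div_iff₀ (by linarith [mul_pos (hk 3) hT0, hh 3])]
      linarith
    have hb7 : w 0 6 ≤ phi7 p (w 0 7) := by
      have h := hF0 6
      rw [hFtne _ 6 (by decide)] at h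
      have he : Fvec p (w 0) 6 = p.k 6 * w 0 7 * (p.ρ 6 - w 0 6) - p.h 6 * w 0 6 := rfl
      rw [he] at h
      unfold phi7
      rw [le_div_iff₀ (by linarith [mul_pos (hk 6) hT0, hh 6])]
      linarith
    have hb5 : w 0 4 ≤ phi5 p (w 0 7) := by
      have h := hF0 4
      rw [hFtne _ 4 (by decide)] at h
      have he : Fvec p (w 0) 4 = p.k 4 * w 0 6 * (p.ρ 4 - w 0 4) - p.h 4 * w 0 4 := rfl
      rw [he] at h
      have h6nn : 0 ≤ w 0 6 := (hposw 6 0 le_rfl).le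
      have step : w 0 4 ≤ p.ρ 4 * (p.k 4 * w 0 6) / ((p.k 4 * w 0 6) + p.h 4) := by
        rw [le_div_iff₀ (by linarith [hh 4, mul_nonneg (hk 4).le h6nn])]
        linarith
      refine step.trans ?_
      rw [phi5_eq]
      exact frac_mono (hh 4) hρ4.le (mul_nonneg (hk 4).le h6nn)
        (mul_le_mul_of_nonneg_left hb7 (hk 4).le)
    have hb2 : w 0 1 ≤ phi2 p (w 0 7) := by
      have h := hF0 1
      rw [hFtne _ 1 (by decide)] at h
      have he : Fvec p (w 0) 1 = p.k 1 * w 0 3 * w 0 4 - p.h 1 * w 0 1 := rfl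
      rw [he] at h
      have hprod : w 0 3 * w 0 4 ≤ phi4 p (w 0 7) * phi5 p (w 0 7) :=
        mul_le_mul hb4 hb5 (hposw 4 0 le_rfl).le (phi4_nonneg hp hTnn)
      have heq : phi2 p (w 0 7) = p.k 1 * (phi4 p (w 0 7) * phi5 p (w 0 7)) / p.h 1 := by
        unfold phi2; ring
      rw [heq, le_div_iff₀ (hh 1)]
      linarith [mul_le_mul_of_nonneg_left hprod (hk 1).le]
    have hb6 : w 0 5 ≤ phi6 p (w 0 7) := by
      have h := hF0 5
      rw [hFtne _ 5 (by decide)] at h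
      have he : Fvec p (w 0) 5 =
          (p.k 5 * w 0 4 + p.kb6 * w 0 1) * (p.ρ 5 - w 0 5) - p.h 5 * w 0 5 := rfl
      rw [he] at h
      have hSnn : 0 ≤ p.k 5 * w 0 4 + p.kb6 * w 0 1 :=
        add_nonneg (mul_nonneg (hk 5).le (hposw 4 0 le_rfl).le)
          (mul_nonneg hkb6.le (hposw 1 0 le_rfl).le)
      have step : w 0 5 ≤ p.ρ 5 * (p.k 5 * w 0 4 + p.kb6 * w 0 1) /
          ((p.k 5 * w 0 4 + p.kb6 * w 0 1) + p.h 5) := by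
        rw [le_div_iff₀ (by linarith [hh 5])]
        linarith
      refine step.trans ?_
      unfold phi6
      exact frac_mono (hh 5) hρ5.le hSnn
        (add_le_add (mul_le_mul_of_nonneg_left hb5 (hk 5).le)
          (mul_le_mul_of_nonneg_left hb2 hkb6.le))
    have hb1 : w 0 0 ≤ phi1 p (w 0 7) := by
      have h := hF0 0
      rw [hFtne _ 0 (by decide)] at h
      have he : Fvec p (w 0) 0 = p.k 0 * w 0 2 * w 0 5 - p.h 0 * w 0 0 := rfl
      rw [he] at h
      have hprod : w 0 2 * w 0 5 ≤ phi3 p (w 0 7) * phi6 p (w 0 7) :=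
        mul_le_mul hb3 hb6 (hposw 5 0 le_rfl).le (phi3_nonneg hp hTnn)
      have heq : phi1 p (w 0 7) = p.k 0 * (phi3 p (w 0 7) * phi6 p (w 0 7)) / p.h 0 := by
        unfold phi1; ring
      rw [heq, le_div_iff₀ (hh 0)]
      linarith [mul_le_mul_of_nonneg_left hprod (hk 0).le]
    have h := hF0 7
    rw [hFt7] at h
    have hg0 : g (w 0 7) = 0 := hgz _ (fun hmem => absurd hmem.1 (by push_neg; linarith))
    have hrnn : 0 ≤ p.ρ 7 - w 0 7 := by linarith
    have hF7P : Fvec p (w 0) 7 ≤ Ppoly p (w 0 7) := by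
      have he : Fvec p (w 0) 7 =
          (p.k 7 * w 0 5 + p.kb8 * w 0 0) * (p.ρ 7 - w 0 7) - p.h 7 * w 0 7 := rfl
      rw [he]
      unfold Ppoly
      have hcle : p.k 7 * w 0 5 + p.kb8 * w 0 0 ≤
          p.k 7 * phi6 p (w 0 7) + p.kb8 * phi1 p (w 0 7) :=
        add_le_add (mul_le_mul_of_nonneg_left hb6 (hk 7).le)
          (mul_le_mul_of_nonneg_left hb1 hkb8.le)
      have := mul_le_mul_of_nonneg_right hcle hrnn
      linarith
    have hPneg : Ppoly p (w 0 7) < 0 := Ppoly_neg_low hp hP' ⟨hT0, hcon⟩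
    have h1 := mul_le_mul_of_nonneg_left hF7P hA0
    rw [hg0, mul_zero, add_zero] at h
    have hsum : A * Ppoly p (w 0 7) + B * Ppoly p (w 0 7) = Ppoly p (w 0 7) := by
      rw [← add_mul, hAB, one_mul]
    linarith
  -- persistence of the thrombin component
  have hq7 : C / p.D 7 * δ0^2 / 2 ≤ Tb / 2 := by
    rw [hδ0sq]
    have h1 := hC0.ne'
    have h2 := (hDp 7).ne'
    apply le_of_eq
    field_simp
  have hP7 : ∀ x ∈ Set.Icc (0:ℝ) δ0, Tb/2 ≤ w x 7 :=
    persist_half (p.D 7) C (hDp 7) hC0.le (fun y => w y 7)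
      (fun y => Ftau p τ₁ g τ (w y) 7) (hC2 7) (hODE 7) (hd0w 7)
      (fun y hy => (abs_le.mp (hCge 7 y hy)).2) Tb δ0 hTbw hq7
  -- stage 1 : components 2, 3, 6
  have hkA : eA < w 0 2 := by
    refine keyLem (p.D 2) (hDp 2) (fun y => w y 2) (fun y => Ftau p τ₁ g τ (w y) 2)
      (hC2 2) (hODE 2) (hd0w 2) (fun y hy => hposw 2 y hy)
      (fun a b ha hab => hmono 2 a b ha hab) δ0 eA c2 hδ0pos hc2pos ?_ ?_
    · intro x hx hfx
      show c2 ≤ Ftau p τ₁ g τ (w x) 2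
      rw [hFtne _ 2 (by decide)]
      have he : Fvec p (w x) 2 = p.k 2 * w x 7 * (p.ρ 2 - w x 2) - p.h 2 * w x 2 := rfl
      rw [he]
      have h7 : Tb/2 ≤ w x 7 := hP7 x hx
      have hεa : eA ≤ p.ρ 2/2 := by rw [heAdef]; exact (min_le_left _ _).trans (min_le_left _ _)
      have hεb : eA ≤ c2/p.h 2 := by rw [heAdef]; exact (min_le_left _ _).trans (min_le_right _ _)
      have h2x : 0 ≤ w x 2 := (hposw 2 x hx.1).le
      have hfx' : w x 2 ≤ eA := hfx
      have hprod : p.k 2 * (Tb/2) * (p.ρ 2/2) ≤ p.k 2 * w x 7 * (p.ρ 2 - w x 2) :=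
        mul_le_mul (mul_le_mul_of_nonneg_left h7 (hk 2).le) (by linarith) (by linarith)
          (mul_nonneg (hk 2).le (by linarith))
      have hceq : p.k 2 * (Tb/2) * (p.ρ 2/2) = 2*c2 := by rw [hc2def]; ring
      have hhc : p.h 2 * w x 2 ≤ c2 := by
        have h1 := mul_le_mul_of_nonneg_left (hfx'.trans hεb) (hh 2).le
        have h2 : p.h 2 * (c2/p.h 2) = c2 := by rw [mul_comm]; exact div_mul_cancel₀ _ (hh 2).ne'
        linarith
      linarith
    · rw [heAdef]; exact min_le_right _ _
  have hkB : eB < w 0 3 := by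
    refine keyLem (p.D 3) (hDp 3) (fun y => w y 3) (fun y => Ftau p τ₁ g τ (w y) 3)
      (hC2 3) (hODE 3) (hd0w 3) (fun y hy => hposw 3 y hy)
      (fun a b ha hab => hmono 3 a b ha hab) δ0 eB c3 hδ0pos hc3pos ?_ ?_
    · intro x hx hfx
      show c3 ≤ Ftau p τ₁ g τ (w x) 3
      rw [hFtne _ 3 (by decide)]
      have he : Fvec p (w x) 3 = p.k 3 * w x 7 * (p.ρ 3 - w x 3) - p.h 3 * w x 3 := rfl
      rw [he]
      have h7 : Tb/2 ≤ w x 7 := hP7 x hx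
      have hεa : eB ≤ p.ρ 3/2 := by rw [heBdef]; exact (min_le_left _ _).trans (min_le_left _ _)
      have hεb : eB ≤ c3/p.h 3 := by rw [heBdef]; exact (min_le_left _ _).trans (min_le_right _ _)
      have h2x : 0 ≤ w x 3 := (hposw 3 x hx.1).le
      have hfx' : w x 3 ≤ eB := hfx
      have hprod : p.k 3 * (Tb/2) * (p.ρ 3/2) ≤ p.k 3 * w x 7 * (p.ρ 3 - w x 3) :=
        mul_le_mul (mul_le_mul_of_nonneg_left h7 (hk 3).le) (by linarith) (by linarith)
          (mul_nonneg (hk 3).le (by linarith))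
      have hceq : p.k 3 * (Tb/2) * (p.ρ 3/2) = 2*c3 := by rw [hc3def]; ring
      have hhc : p.h 3 * w x 3 ≤ c3 := by
        have h1 := mul_le_mul_of_nonneg_left (hfx'.trans hεb) (hh 3).le
        have h2 : p.h 3 * (c3/p.h 3) = c3 := by rw [mul_comm]; exact div_mul_cancel₀ _ (hh 3).ne'
        linarith
      linarith
    · rw [heBdef]; exact min_le_right _ _
  have hkC : eC < w 0 6 := by
    refine keyLem (p.D 6) (hDp 6) (fun y => w y 6) (fun y => Ftau p τ₁ g τ (w y) 6)
      (hC2 6) (hODE 6) (hd0w 6) (fun y hy => hposw 6 y hy)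
      (fun a b ha hab => hmono 6 a b ha hab) δ0 eC c6 hδ0pos hc6pos ?_ ?_
    · intro x hx hfx
      show c6 ≤ Ftau p τ₁ g τ (w x) 6
      rw [hFtne _ 6 (by decide)]
      have he : Fvec p (w x) 6 = p.k 6 * w x 7 * (p.ρ 6 - w x 6) - p.h 6 * w x 6 := rfl
      rw [he]
      have h7 : Tb/2 ≤ w x 7 := hP7 x hx
      have hεa : eC ≤ p.ρ 6/2 := by rw [heCdef]; exact (min_le_left _ _).trans (min_le_left _ _)
      have hεb : eC ≤ c6/p.h 6 := by rw [heCdef]; exact (min_le_left _ _).trans (min_le_right _ _)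
      have h2x : 0 ≤ w x 6 := (hposw 6 x hx.1).le
      have hfx' : w x 6 ≤ eC := hfx
      have hprod : p.k 6 * (Tb/2) * (p.ρ 6/2) ≤ p.k 6 * w x 7 * (p.ρ 6 - w x 6) :=
        mul_le_mul (mul_le_mul_of_nonneg_left h7 (hk 6).le) (by linarith) (by linarith)
          (mul_nonneg (hk 6).le (by linarith))
      have hceq : p.k 6 * (Tb/2) * (p.ρ 6/2) = 2*c6 := by rw [hc6def]; ring
      have hhc : p.h 6 * w x 6 ≤ c6 := by
        have h1 := mul_le_mul_of_nonneg_left (hfx'.trans hεb) (hh 6).le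
        have h2 : p.h 6 * (c6/p.h 6) = c6 := by rw [mul_comm]; exact div_mul_cancel₀ _ (hh 6).ne'
        linarith
      linarith
    · rw [heCdef]; exact min_le_right _ _
  -- persistence of component 6 on [0, δ1]
  have hq6 : C / p.D 6 * δ1^2 / 2 ≤ eC / 2 := by
    have h1 : C/p.D 6 * δ1^2 ≤ C/p.D 6 * (eC * p.D 6 / C) :=
      mul_le_mul_of_nonneg_left hδ1sq (div_nonneg hC0.le (hDp 6).le)
    have h2 : C/p.D 6 * (eC * p.D 6 / C) = eC := by
      have hC' := hC0.ne'
      have hD' := (hDp 6).ne'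
      field_simp
    linarith
  have hP6 : ∀ x ∈ Set.Icc (0:ℝ) δ1, eC/2 ≤ w x 6 :=
    persist_half (p.D 6) C (hDp 6) hC0.le (fun y => w y 6)
      (fun y => Ftau p τ₁ g τ (w y) 6) (hC2 6) (hODE 6) (hd0w 6)
      (fun y hy => (abs_le.mp (hCge 6 y hy)).2) eC δ1 hkC.le hq6
  -- stage 2 : component 4
  have hkD : eD < w 0 4 := by
    refine keyLem (p.D 4) (hDp 4) (fun y => w y 4) (fun y => Ftau p τ₁ g τ (w y) 4)
      (hC2 4) (hODE 4) (hd0w 4) (fun y hy => hposw 4 y hy)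
      (fun a b ha hab => hmono 4 a b ha hab) δ1 eD c4 hδ1pos hc4pos ?_ ?_
    · intro x hx hfx
      show c4 ≤ Ftau p τ₁ g τ (w x) 4
      rw [hFtne _ 4 (by decide)]
      have he : Fvec p (w x) 4 = p.k 4 * w x 6 * (p.ρ 4 - w x 4) - p.h 4 * w x 4 := rfl
      rw [he]
      have h6 : eC/2 ≤ w x 6 := hP6 x hx
      have hεa : eD ≤ p.ρ 4/2 := by rw [heDdef]; exact (min_le_left _ _).trans (min_le_left _ _)
      have hεb : eD ≤ c4/p.h 4 := by rw [heDdef]; exact (min_le_left _ _).trans (min_le_right _ _)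
      have h2x : 0 ≤ w x 4 := (hposw 4 x hx.1).le
      have hfx' : w x 4 ≤ eD := hfx
      have hprod : p.k 4 * (eC/2) * (p.ρ 4/2) ≤ p.k 4 * w x 6 * (p.ρ 4 - w x 4) :=
        mul_le_mul (mul_le_mul_of_nonneg_left h6 (hk 4).le) (by linarith) (by linarith)
          (mul_nonneg (hk 4).le (by linarith [half_pos heCpos]))
      have hceq : p.k 4 * (eC/2) * (p.ρ 4/2) = 2*c4 := by rw [hc4def]; ring
      have hhc : p.h 4 * w x 4 ≤ c4 := by
        have h1 := mul_le_mul_of_nonneg_left (hfx'.trans hεb) (hh 4).le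
        have h2 : p.h 4 * (c4/p.h 4) = c4 := by rw [mul_comm]; exact div_mul_cancel₀ _ (hh 4).ne'
        linarith
      linarith
    · rw [heDdef]; exact min_le_right _ _
  -- persistence of component 4 on [0, δ2]
  have hq4 : C / p.D 4 * δ2^2 / 2 ≤ eD / 2 := by
    have h1 : C/p.D 4 * δ2^2 ≤ C/p.D 4 * (eD * p.D 4 / C) :=
      mul_le_mul_of_nonneg_left hδ2sq (div_nonneg hC0.le (hDp 4).le)
    have h2 : C/p.D 4 * (eD * p.D 4 / C) = eD := by
      have hC' := hC0.ne'
      have hD' := (hDp 4).ne'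
      field_simp
    linarith
  have hP4 : ∀ x ∈ Set.Icc (0:ℝ) δ2, eD/2 ≤ w x 4 :=
    persist_half (p.D 4) C (hDp 4) hC0.le (fun y => w y 4)
      (fun y => Ftau p τ₁ g τ (w y) 4) (hC2 4) (hODE 4) (hd0w 4)
      (fun y hy => (abs_le.mp (hCge 4 y hy)).2) eD δ2 hkD.le hq4
  -- stage 3 : component 5
  have hkE : eE < w 0 5 := by
    refine keyLem (p.D 5) (hDp 5) (fun y => w y 5) (fun y => Ftau p τ₁ g τ (w y) 5)
      (hC2 5) (hODE 5) (hd0w 5) (fun y hy => hposw 5 y hy)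
      (fun a b ha hab => hmono 5 a b ha hab) δ2 eE c5 hδ2pos hc5pos ?_ ?_
    · intro x hx hfx
      show c5 ≤ Ftau p τ₁ g τ (w x) 5
      rw [hFtne _ 5 (by decide)]
      have he : Fvec p (w x) 5 =
          (p.k 5 * w x 4 + p.kb6 * w x 1) * (p.ρ 5 - w x 5) - p.h 5 * w x 5 := rfl
      rw [he]
      have h4 : eD/2 ≤ w x 4 := hP4 x hx
      have hεa : eE ≤ p.ρ 5/2 := by rw [heEdef]; exact (min_le_left _ _).trans (min_le_left _ _)
      have hεb : eE ≤ c5/p.h 5 := by rw [heEdef]; exact (min_le_left _ _).trans (min_le_right _ _)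
      have h2x : 0 ≤ w x 5 := (hposw 5 x hx.1).le
      have h1x : 0 ≤ w x 1 := (hposw 1 x hx.1).le
      have hfx' : w x 5 ≤ eE := hfx
      have hScoef : p.k 5 * (eD/2) ≤ p.k 5 * w x 4 + p.kb6 * w x 1 := by
        have := mul_le_mul_of_nonneg_left h4 (hk 5).le
        linarith [mul_nonneg hkb6.le h1x]
      have hprod : p.k 5 * (eD/2) * (p.ρ 5/2) ≤
          (p.k 5 * w x 4 + p.kb6 * w x 1) * (p.ρ 5 - w x 5) :=
        mul_le_mul hScoef (by linarith) (by linarith)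
          (le_trans (mul_nonneg (hk 5).le (half_pos heDpos).le) hScoef)
      have hceq : p.k 5 * (eD/2) * (p.ρ 5/2) = 2*c5 := by rw [hc5def]; ring
      have hhc : p.h 5 * w x 5 ≤ c5 := by
        have h1 := mul_le_mul_of_nonneg_left (hfx'.trans hεb) (hh 5).le
        have h2 : p.h 5 * (c5/p.h 5) = c5 := by rw [mul_comm]; exact div_mul_cancel₀ _ (hh 5).ne'
        linarith
      linarith
    · rw [heEdef]; exact min_le_right _ _
  -- persistences on [0, δ3]
  have hq5 : C / p.D 5 * δ3^2 / 2 ≤ eE / 2 := by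
    have h1 : C/p.D 5 * δ3^2 ≤ C/p.D 5 * (eE * p.D 5 / C) :=
      mul_le_mul_of_nonneg_left hδ3sqE (div_nonneg hC0.le (hDp 5).le)
    have h2 : C/p.D 5 * (eE * p.D 5 / C) = eE := by
      have hC' := hC0.ne'
      have hD' := (hDp 5).ne'
      field_simp
    linarith
  have hP5 : ∀ x ∈ Set.Icc (0:ℝ) δ3, eE/2 ≤ w x 5 :=
    persist_half (p.D 5) C (hDp 5) hC0.le (fun y => w y 5)
      (fun y => Ftau p τ₁ g τ (w y) 5) (hC2 5) (hODE 5) (hd0w 5)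
      (fun y hy => (abs_le.mp (hCge 5 y hy)).2) eE δ3 hkE.le hq5
  have hq3 : C / p.D 3 * δ3^2 / 2 ≤ eB / 2 := by
    have h1 : C/p.D 3 * δ3^2 ≤ C/p.D 3 * (eB * p.D 3 / C) :=
      mul_le_mul_of_nonneg_left hδ3sqB (div_nonneg hC0.le (hDp 3).le)
    have h2 : C/p.D 3 * (eB * p.D 3 / C) = eB := by
      have hC' := hC0.ne'
      have hD' := (hDp 3).ne'
      field_simp
    linarith
  have hP3 : ∀ x ∈ Set.Icc (0:ℝ) δ3, eB/2 ≤ w x 3 :=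
    persist_half (p.D 3) C (hDp 3) hC0.le (fun y => w y 3)
      (fun y => Ftau p τ₁ g τ (w y) 3) (hC2 3) (hODE 3) (hd0w 3)
      (fun y hy => (abs_le.mp (hCge 3 y hy)).2) eB δ3 hkB.le hq3
  have hq2 : C / p.D 2 * δ3^2 / 2 ≤ eA / 2 := by
    have h1 : C/p.D 2 * δ3^2 ≤ C/p.D 2 * (eA * p.D 2 / C) :=
      mul_le_mul_of_nonneg_left hδ3sqA (div_nonneg hC0.le (hDp 2).le)
    have h2 : C/p.D 2 * (eA * p.D 2 / C) = eA := by
      have hC' := hC0.ne'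
      have hD' := (hDp 2).ne'
      field_simp
    linarith
  have hP2 : ∀ x ∈ Set.Icc (0:ℝ) δ3, eA/2 ≤ w x 2 :=
    persist_half (p.D 2) C (hDp 2) hC0.le (fun y => w y 2)
      (fun y => Ftau p τ₁ g τ (w y) 2) (hC2 2) (hODE 2) (hd0w 2)
      (fun y hy => (abs_le.mp (hCge 2 y hy)).2) eA δ3 hkA.le hq2
  -- stage 4 : components 1 and 0
  have hkF : eF < w 0 1 := by
    refine keyLem (p.D 1) (hDp 1) (fun y => w y 1) (fun y => Ftau p τ₁ g τ (w y) 1)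
      (hC2 1) (hODE 1) (hd0w 1) (fun y hy => hposw 1 y hy)
      (fun a b ha hab => hmono 1 a b ha hab) δ3 eF c1 hδ3pos hc1pos ?_ ?_
    · intro x hx hfx
      show c1 ≤ Ftau p τ₁ g τ (w x) 1
      rw [hFtne _ 1 (by decide)]
      have he : Fvec p (w x) 1 = p.k 1 * w x 3 * w x 4 - p.h 1 * w x 1 := rfl
      rw [he]
      have h3 : eB/2 ≤ w x 3 := hP3 x hx
      have h4 : eD/2 ≤ w x 4 := hP4 x ⟨hx.1, hx.2.trans hδ32⟩
      have hεb : eF ≤ c1/p.h 1 := by rw [heFdef]; exact min_le_left _ _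
      have hfx' : w x 1 ≤ eF := hfx
      have hprod : p.k 1 * (eB/2) * (eD/2) ≤ p.k 1 * w x 3 * w x 4 :=
        mul_le_mul (mul_le_mul_of_nonneg_left h3 (hk 1).le) h4 (half_pos heDpos).le
          (mul_nonneg (hk 1).le (by linarith [half_pos heBpos]))
      have hceq : p.k 1 * (eB/2) * (eD/2) = 2*c1 := by rw [hc1def]; ring
      have hhc : p.h 1 * w x 1 ≤ c1 := by
        have h1 := mul_le_mul_of_nonneg_left (hfx'.trans hεb) (hh 1).le
        have h2 : p.h 1 * (c1/p.h 1) = c1 := by rw [mul_comm]; exact div_mul_cancel₀ _ (hh 1).ne'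
        linarith
      linarith
    · rw [heFdef]; exact min_le_right _ _
  have hkH : eH < w 0 0 := by
    refine keyLem (p.D 0) (hDp 0) (fun y => w y 0) (fun y => Ftau p τ₁ g τ (w y) 0)
      (hC2 0) (hODE 0) (hd0w 0) (fun y hy => hposw 0 y hy)
      (fun a b ha hab => hmono 0 a b ha hab) δ3 eH c0 hδ3pos hc0pos ?_ ?_
    · intro x hx hfx
      show c0 ≤ Ftau p τ₁ g τ (w x) 0
      rw [hFtne _ 0 (by decide)]
      have he : Fvec p (w x) 0 = p.k 0 * w x 2 * w x 5 - p.h 0 * w x 0 := rfl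
      rw [he]
      have h2 : eA/2 ≤ w x 2 := hP2 x hx
      have h5 : eE/2 ≤ w x 5 := hP5 x hx
      have hεb : eH ≤ c0/p.h 0 := by rw [heHdef]; exact min_le_left _ _
      have hfx' : w x 0 ≤ eH := hfx
      have hprod : p.k 0 * (eA/2) * (eE/2) ≤ p.k 0 * w x 2 * w x 5 :=
        mul_le_mul (mul_le_mul_of_nonneg_left h2 (hk 0).le) h5 (half_pos heEpos).le
          (mul_nonneg (hk 0).le (by linarith [half_pos heApos]))
      have hceq : p.k 0 * (eA/2) * (eE/2) = 2*c0 := by rw [hc0def]; ring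
      have hhc : p.h 0 * w x 0 ≤ c0 := by
        have h1 := mul_le_mul_of_nonneg_left (hfx'.trans hεb) (hh 0).le
        have h2' : p.h 0 * (c0/p.h 0) = c0 := by rw [mul_comm]; exact div_mul_cancel₀ _ (hh 0).ne'
        linarith
      linarith
    · rw [heHdef]; exact min_le_right _ _
  -- conclusion
  intro i
  fin_cases i
  · show em / 2 < w 0 0
    linarith [hkH, hemH, heHpos]
  · show em / 2 < w 0 1
    linarith [hkF, hemF, heFpos]
  · show em / 2 < w 0 2
    linarith [hkA, hemA, heApos]
  · show em / 2 < w 0 3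
    linarith [hkB, hemB, heBpos]
  · show em / 2 < w 0 4
    linarith [hkD, hemD, heDpos]
  · show em / 2 < w 0 5
    linarith [hkE, hemE, heEpos]
  · show em / 2 < w 0 6
    linarith [hkC, hemC, heCpos]
  · show em / 2 < w 0 7
    linarith [hTbw, hemTb, hTb]





end
end

section
/- Let T : [0,∞) → ℝ be a C² solution of the scalar pulse problem D₈T″ + P(T) + τ₁g(T) = 0 on [0,∞), T′(0) = 0, T(x) → 0 as x → +∞, T′(x) < 0 for x > 0. Let x₀ > 0 be such that P′(T(x)) + τ₁g′(T(x)) < 0 for all x ≥ x₀. Suppose z : [x₀,∞) → ℝ is twice continuously differentiable, not identically zero, satisfies D₈z″(x) + (P′(T(x)) + τ₁g′(T(x)))·z(x) = 0 for all x ≥ x₀, z(x) → 0 as x → +∞, and z(x₀) ≥ 0. Then z(x) ≥ 0 for all x ≥ x₀ and z(x) > 0 for all x > x₀. -/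
open Filter Topology Matrix
open scoped ENNReal

noncomputable section

/-- Gronwall-type uniqueness: a solution of a second-order linear-bounded ODE vanishing
to first order at `a` vanishes on `[a,b]`. -/
lemma gronwall_zero (u v w : ℝ → ℝ) (a b C : ℝ)
    (hu : ∀ t ∈ Set.Icc a b, HasDerivAt u (v t) t)
    (hv : ∀ t ∈ Set.Icc a b, HasDerivAt v (w t) t)
    (hw : ∀ t ∈ Set.Icc a b, |w t| ≤ C * |u t|)
    (hua : u a = 0) (hva : v a = 0) :
    ∀ t ∈ Set.Icc a b, u t = 0 := by
  set K : ℝ := max 1 C with hKdef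
  have hK1 : (1 : ℝ) ≤ K := le_max_left _ _
  have hKC : C ≤ K := le_max_right _ _
  set f : ℝ → ℝ × ℝ := fun t => (u t, v t) with hfdef
  have hfd : ∀ t ∈ Set.Icc a b, HasDerivAt f (v t, w t) t := fun t ht =>
    (hu t ht).prodMk (hv t ht)
  have hcont : ContinuousOn f (Set.Icc a b) := fun t ht =>
    ((hfd t ht).continuousAt).continuousWithinAt
  have key : ∀ t ∈ Set.Icc a b, ‖f t‖ ≤ gronwallBound 0 K 0 (t - a) := by
    apply norm_le_gronwallBound_of_norm_deriv_right_le hcont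
      (fun t ht => ((hfd t (Set.mem_Icc_of_Ico ht)).hasDerivWithinAt))
    · simp [hfdef, hua, hva, Prod.norm_def]
    · intro t ht
      have ht' : t ∈ Set.Icc a b := Set.mem_Icc_of_Ico ht
      have hft : ‖f t‖ = max |u t| |v t| := by
        simp [hfdef, Prod.norm_def, Real.norm_eq_abs]
      have hnn : (0 : ℝ) ≤ ‖f t‖ := norm_nonneg _
      have h1 : |v t| ≤ K * ‖f t‖ := by
        have : |v t| ≤ ‖f t‖ := by rw [hft]; exact le_max_right _ _
        nlinarith
      have h2 : |w t| ≤ K * ‖f t‖ := by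
        have hu' : |u t| ≤ ‖f t‖ := by rw [hft]; exact le_max_left _ _
        have h0 := hw t ht'
        have hK0 : (0 : ℝ) ≤ K := le_trans zero_le_one hK1
        calc |w t| ≤ C * |u t| := h0
          _ ≤ K * |u t| := mul_le_mul_of_nonneg_right hKC (abs_nonneg _)
          _ ≤ K * ‖f t‖ := mul_le_mul_of_nonneg_left hu' hK0
      have : ‖(v t, w t)‖ ≤ K * ‖f t‖ := by
        rw [Prod.norm_def]; exact max_le (by simpa [Real.norm_eq_abs] using h1)
          (by simpa [Real.norm_eq_abs] using h2)
      linarith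
  intro t ht
  have := key t ht
  rw [gronwallBound_ε0_δ0] at this
  have hf0 : f t = 0 := by
    have : ‖f t‖ = 0 := le_antisymm this (norm_nonneg _)
    exact norm_eq_zero.mp this
  have := congrArg Prod.fst hf0
  simpa [hfdef] using this

/-- `Ppoly` is `C¹` on `(0,∞)`. -/
lemma ppoly_contDiffOn (p : Params) (hp : p.Pos) :
    ContDiffOn ℝ 1 (Ppoly p) (Set.Ioi 0) := by
  obtain ⟨hk, hkb6, hkb8, hh, hρ, hD⟩ := hp
  set S : Set ℝ := Set.Ioi 0 with hS
  have hρ2 : 0 < p.ρ 2 := hρ 2 (by decide)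
  have hρ3 : 0 < p.ρ 3 := hρ 3 (by decide)
  have hρ4 : 0 < p.ρ 4 := hρ 4 (by decide)
  have hρ6 : 0 < p.ρ 6 := hρ 6 (by decide)
  have den3 : ∀ t ∈ S, 0 < p.k 2 * t + p.h 2 := fun t ht =>
    add_pos (mul_pos (hk 2) ht) (hh 2)
  have den4 : ∀ t ∈ S, 0 < p.k 3 * t + p.h 3 := fun t ht =>
    add_pos (mul_pos (hk 3) ht) (hh 3)
  have den7 : ∀ t ∈ S, 0 < p.k 6 * t + p.h 6 := fun t ht =>
    add_pos (mul_pos (hk 6) ht) (hh 6)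
  have c3 : ContDiffOn ℝ 1 (phi3 p) S := by
    unfold phi3
    exact ContDiffOn.div ((contDiff_const.mul contDiff_id).contDiffOn)
      (((contDiff_const.mul contDiff_id).add contDiff_const).contDiffOn)
      (fun t ht => (den3 t ht).ne')
  have c4 : ContDiffOn ℝ 1 (phi4 p) S := by
    unfold phi4
    exact ContDiffOn.div ((contDiff_const.mul contDiff_id).contDiffOn)
      (((contDiff_const.mul contDiff_id).add contDiff_const).contDiffOn)
      (fun t ht => (den4 t ht).ne')
  have c7 : ContDiffOn ℝ 1 (phi7 p) S := by
    unfold phi7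
    exact ContDiffOn.div ((contDiff_const.mul contDiff_id).contDiffOn)
      (((contDiff_const.mul contDiff_id).add contDiff_const).contDiffOn)
      (fun t ht => (den7 t ht).ne')
  have phi7nn : ∀ t ∈ S, 0 ≤ phi7 p t := fun t ht => by
    unfold phi7
    exact div_nonneg (mul_nonneg (mul_pos (hk 6) hρ6).le (Set.mem_Ioi.mp ht).le) (den7 t ht).le
  have den5 : ∀ t ∈ S, 0 < p.k 4 * phi7 p t + p.h 4 := fun t ht =>
    add_pos_of_nonneg_of_pos (mul_nonneg (hk 4).le (phi7nn t ht)) (hh 4)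
  have c5 : ContDiffOn ℝ 1 (phi5 p) S := by
    unfold phi5
    exact ContDiffOn.div (contDiffOn_const.mul c7)
      ((contDiffOn_const.mul c7).add contDiffOn_const)
      (fun t ht => (den5 t ht).ne')
  have phi5nn : ∀ t ∈ S, 0 ≤ phi5 p t := fun t ht => by
    unfold phi5
    exact div_nonneg (mul_nonneg (mul_pos (hk 4) hρ4).le (phi7nn t ht)) (den5 t ht).le
  have phi4nn : ∀ t ∈ S, 0 ≤ phi4 p t := fun t ht => by
    unfold phi4
    exact div_nonneg (mul_nonneg (mul_pos (hk 3) hρ3).le (Set.mem_Ioi.mp ht).le) (den4 t ht).le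
  have c2 : ContDiffOn ℝ 1 (phi2 p) S := by
    unfold phi2
    exact contDiffOn_const.mul (c4.mul c5)
  have phi2nn : ∀ t ∈ S, 0 ≤ phi2 p t := fun t ht => by
    unfold phi2
    exact mul_nonneg (div_nonneg (hk 1).le (hh 1).le)
      (mul_nonneg (phi4nn t ht) (phi5nn t ht))
  have den6 : ∀ t ∈ S, 0 < p.k 5 * phi5 p t + p.kb6 * phi2 p t + p.h 5 := fun t ht =>
    add_pos_of_nonneg_of_pos
      (add_nonneg (mul_nonneg (hk 5).le (phi5nn t ht)) (mul_nonneg hkb6.le (phi2nn t ht)))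
      (hh 5)
  have c6 : ContDiffOn ℝ 1 (phi6 p) S := by
    unfold phi6
    exact ContDiffOn.div
      (contDiffOn_const.mul ((contDiffOn_const.mul c5).add (contDiffOn_const.mul c2)))
      (((contDiffOn_const.mul c5).add (contDiffOn_const.mul c2)).add contDiffOn_const)
      (fun t ht => (den6 t ht).ne')
  have c1 : ContDiffOn ℝ 1 (phi1 p) S := by
    unfold phi1
    exact contDiffOn_const.mul (c3.mul c6)
  unfold Ppoly
  exact (((contDiffOn_const.mul c6).add (contDiffOn_const.mul c1)).mul
    (contDiffOn_const.sub contDiffOn_id)).sub (contDiffOn_const.mul contDiffOn_id)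

/-- Comparison lemma for the scalar linearized equation: if `P′(T(x)) + τ₁g′(T(x)) < 0` for
`x ≥ x₀` and `z ≢ 0` solves `D₈z″ + (P′(T) + τ₁g′(T))z = 0` on `[x₀,∞)` with `z(+∞) = 0`
and `z(x₀) ≥ 0`, then `z ≥ 0` on `[x₀,∞)` and `z > 0` on `(x₀,∞)`. -/
theorem scalar_linearized_positivity (p : Params) (hp : p.Pos) (Tb Tm : ℝ)
    (hP : CondP p Tb Tm) (τ₁ : ℝ) (hτ₁ : τ₁ ∈ Set.Ioo (0 : ℝ) 1) (g : ℝ → ℝ)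
    (hg : GoodG Tb Tm g) (T : ℝ → ℝ) (hT : ScalarPulse p τ₁ g T)
    (x₀ : ℝ) (hx₀ : 0 < x₀)
    (hdec : ∀ x : ℝ, x₀ ≤ x → deriv (Ppoly p) (T x) + τ₁ * deriv g (T x) < 0)
    (z : ℝ → ℝ) (hzC2 : ContDiff ℝ 2 z)
    (hznz : ¬ ∀ x : ℝ, x₀ ≤ x → z x = 0)
    (hzeq : ∀ x : ℝ, x₀ ≤ x →
      p.D 7 * deriv (deriv z) x +
        (deriv (Ppoly p) (T x) + τ₁ * deriv g (T x)) * z x = 0)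
    (hzl : Tendsto z atTop (𝓝 0)) (hz0 : 0 ≤ z x₀) :
    (∀ x : ℝ, x₀ ≤ x → 0 ≤ z x) ∧ ∀ x : ℝ, x₀ < x → 0 < z x := by
  have hD : 0 < p.D 7 := hp.2.2.2.2.2 7
  set c : ℝ → ℝ := fun x => deriv (Ppoly p) (T x) + τ₁ * deriv g (T x) with hcdef
  have hcneg : ∀ x, x₀ ≤ x → c x < 0 := hdec
  have hTcont : Continuous T := hT.1.continuous
  -- T is positive on (0,∞)
  have hTpos : ∀ x : ℝ, 0 < x → 0 < T x := by
    intro x hx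
    by_contra hcon
    push_neg at hcon
    have hanti : StrictAntiOn T (Set.Ici x) := by
      apply strictAntiOn_of_deriv_neg (convex_Ici x) hTcont.continuousOn
      intro y hy
      rw [interior_Ici] at hy
      exact hT.2.2.2.2 y (hx.trans hy)
    have h1 : T (x + 1) < T x :=
      hanti (Set.self_mem_Ici) (by simp : x + 1 ∈ Set.Ici x) (by linarith)
    have h2 : ∀ y, x + 1 ≤ y → T y ≤ T (x + 1) := by
      intro y hy
      rcases eq_or_lt_of_le hy with h | h
      · rw [← h]
      · exact (hanti (by simp : x + 1 ∈ Set.Ici x) (by simp; linarith) h).le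
    have h3 : (0 : ℝ) ≤ T (x + 1) :=
      le_of_tendsto hT.2.2.2.1 (eventually_atTop.mpr ⟨x + 1, h2⟩)
    linarith
  -- continuity of the coefficient c on [x₀, ∞)
  have hgc : Continuous (deriv g) :=
    (hg.1.of_le (by simp) : ContDiff ℝ 1 g).continuous_deriv le_rfl
  have hccont : ContinuousOn c (Set.Ici x₀) := by
    apply ContinuousOn.add
    · exact ((ppoly_contDiffOn p hp).continuousOn_deriv_of_isOpen isOpen_Ioi
        le_rfl).comp hTcont.continuousOn
        (fun x hx => Set.mem_Ioi.mpr (hTpos x (hx₀.trans_le hx)))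
    · exact (continuous_const.mul (hgc.comp hTcont)).continuousOn
  -- the ODE rewritten
  have hz'' : ∀ x, x₀ ≤ x → deriv (deriv z) x = -(c x * z x) / p.D 7 := by
    intro x hx
    have h := hzeq x hx
    have hcx : c x = deriv (Ppoly p) (T x) + τ₁ * deriv g (T x) := rfl
    rw [eq_div_iff hD.ne', hcx]
    linarith [h]
  -- differentiability facts
  have hzdiff2 : ContDiff ℝ 1 (deriv z) := by
    have h2 : ContDiff ℝ ((1 : ℕ) + 1) z := by exact_mod_cast hzC2
    exact (contDiff_succ_iff_deriv.mp h2).2.2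
  have hzd : Differentiable ℝ z := hzC2.differentiable (by norm_num)
  have hz'd : Differentiable ℝ (deriv z) := hzdiff2.differentiable one_ne_zero
  have hz''c : Continuous (deriv (deriv z)) := hzdiff2.continuous_deriv le_rfl
  -- Step 1 : nonnegativity
  have hnn : ∀ x, x₀ ≤ x → 0 ≤ z x := by
    by_contra hcon
    push_neg at hcon
    obtain ⟨x₁, hx₁, hzx₁⟩ := hcon
    have hev : ∀ᶠ y in atTop, z x₁ < z y := hzl.eventually (eventually_gt_nhds hzx₁)
    obtain ⟨R, hR⟩ := eventually_atTop.mp hev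
    have hx₁R : x₁ < R := by
      by_contra h
      push_neg at h
      exact absurd (hR x₁ h) (lt_irrefl _)
    have hxR : x₀ ≤ R := hx₁.trans hx₁R.le
    obtain ⟨ξ, hξmem, hξmin⟩ := (isCompact_Icc (a := x₀) (b := R)).exists_isMinOn
      (Set.nonempty_Icc.mpr hxR) hzC2.continuous.continuousOn
    have hξle : z ξ ≤ z x₁ := hξmin ⟨hx₁, hx₁R.le⟩
    have hξneg : z ξ < 0 := hξle.trans_lt hzx₁
    have hξgt : x₀ < ξ := by
      rcases eq_or_lt_of_le hξmem.1 with h | h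
      · exfalso; rw [h] at hz0; linarith
      · exact h
    have hξlt : ξ < R := by
      rcases eq_or_lt_of_le hξmem.2 with h | h
      · exfalso
        have := hR R le_rfl
        rw [h] at hξle
        linarith
      · exact h
    have hloc : IsLocalMin z ξ := hξmin.isLocalMin (Icc_mem_nhds hξgt hξlt)
    have hz'ξ : deriv z ξ = 0 := hloc.deriv_eq_zero
    have hz''ξ : deriv (deriv z) ξ < 0 := by
      rw [hz'' ξ hξgt.le]
      have hc := hcneg ξ hξgt.le
      have hpos : 0 < c ξ * z ξ := mul_pos_of_neg_of_neg hc hξneg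
      exact div_neg_of_neg_of_pos (by linarith) hD
    have hevs : ∀ᶠ y in 𝓝 ξ, deriv (deriv z) y < 0 :=
      (hz''c.continuousAt (x := ξ)).eventually (eventually_lt_nhds hz''ξ)
    obtain ⟨δ, hδ, hball⟩ := Metric.eventually_nhds_iff_ball.mp hevs
    set η : ℝ := min (δ / 2) ((ξ - x₀) / 2) with hηdef
    have hη : 0 < η := lt_min (by linarith) (by linarith)
    have hηδ : η < δ := lt_of_le_of_lt (min_le_left _ _) (by linarith)
    have hηx₀ : x₀ ≤ ξ - η := by
      have : η ≤ (ξ - x₀) / 2 := min_le_right _ _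
      linarith
    have hsub : Set.Icc (ξ - η) ξ ⊆ Metric.ball ξ δ := by
      intro y hy
      rw [Metric.mem_ball, Real.dist_eq, abs_lt]
      constructor <;> [linarith [hy.1]; linarith [hy.2, hη]]
    have hanti : StrictAntiOn (deriv z) (Set.Icc (ξ - η) ξ) := by
      apply strictAntiOn_of_deriv_neg (convex_Icc _ _) hz'd.continuous.continuousOn
      intro y hy
      rw [interior_Icc] at hy
      exact hball y (hsub ⟨hy.1.le, hy.2.le⟩)
    have hmono : StrictMonoOn z (Set.Icc (ξ - η) ξ) := by
      apply strictMonoOn_of_deriv_pos (convex_Icc _ _) hzd.continuous.continuousOn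
      intro y hy
      rw [interior_Icc] at hy
      have := hanti ⟨hy.1.le, hy.2.le⟩ ⟨by linarith [hη], le_rfl⟩ hy.2
      rw [hz'ξ] at this
      exact this
    have hlt : z (ξ - η) < z ξ :=
      hmono ⟨le_rfl, by linarith⟩ ⟨by linarith, le_rfl⟩ (by linarith)
    exact absurd (hξmin ⟨hηx₀, by linarith⟩) (not_le.mpr hlt)
  -- Step 2 : strict positivity
  have hpos : ∀ x, x₀ < x → 0 < z x := by
    intro x₁ hx₁
    by_contra hcon
    push_neg at hcon
    have hz1 : z x₁ = 0 := le_antisymm hcon (hnn x₁ hx₁.le)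
    have hloc : IsLocalMin z x₁ := by
      filter_upwards [eventually_ge_nhds hx₁] with y hy
      rw [hz1]
      exact hnn y hy
    have hz'1 : deriv z x₁ = 0 := hloc.deriv_eq_zero
    apply hznz
    intro x hx
    set b : ℝ := max x x₁ with hbdef
    have hx₀b : x₀ ≤ b := le_trans hx (le_max_left _ _)
    have hx₁b : x₁ ≤ b := le_max_right _ _
    obtain ⟨M, hM⟩ := (isCompact_Icc (a := x₀) (b := b)).exists_bound_of_continuousOn
      (hccont.mono Set.Icc_subset_Ici_self)
    set C : ℝ := M / p.D 7 with hCdef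
    have hbound : ∀ s ∈ Set.Icc x₀ b, |deriv (deriv z) s| ≤ C * |z s| := by
      intro s hs
      have hMs : |c s| ≤ M := by simpa [Real.norm_eq_abs] using hM s hs
      rw [hz'' s hs.1, abs_div, abs_neg, abs_mul, abs_of_pos hD, hCdef,
        div_mul_eq_mul_div]
      gcongr
    have hfwd : ∀ s ∈ Set.Icc x₁ b, z s = 0 := by
      apply gronwall_zero z (deriv z) (deriv (deriv z)) x₁ b C
        (fun t _ => (hzd t).hasDerivAt) (fun t _ => (hz'd t).hasDerivAt)
        (fun t ht => hbound t ⟨hx₁.le.trans ht.1, ht.2⟩) hz1 hz'1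
    have hbwd : ∀ s ∈ Set.Icc x₀ x₁, z s = 0 := by
      intro s hs
      have h1 : ∀ t ∈ Set.Icc x₁ (2 * x₁ - x₀),
          HasDerivAt (fun t => z (2 * x₁ - t)) (-deriv z (2 * x₁ - t)) t := by
        intro t _
        have hi : HasDerivAt (fun t : ℝ => 2 * x₁ - t) (-1) t := by
          simpa using (hasDerivAt_id t).const_sub (2 * x₁)
        have := ((hzd (2 * x₁ - t)).hasDerivAt).comp t hi
        exact this.congr_deriv (by ring)
      have h2 : ∀ t ∈ Set.Icc x₁ (2 * x₁ - x₀),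
          HasDerivAt (fun t => -deriv z (2 * x₁ - t))
            (deriv (deriv z) (2 * x₁ - t)) t := by
        intro t _
        have hi : HasDerivAt (fun t : ℝ => 2 * x₁ - t) (-1) t := by
          simpa using (hasDerivAt_id t).const_sub (2 * x₁)
        have := (((hz'd (2 * x₁ - t)).hasDerivAt).comp t hi).neg
        exact this.congr_deriv (by ring)
      have h3 : ∀ t ∈ Set.Icc x₁ (2 * x₁ - x₀),
          |deriv (deriv z) (2 * x₁ - t)| ≤ C * |z (2 * x₁ - t)| := by
        intro t ht
        exact hbound (2 * x₁ - t) ⟨by linarith [ht.2], by linarith [ht.1, hx₁b]⟩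
      have key := gronwall_zero (fun t => z (2 * x₁ - t))
        (fun t => -deriv z (2 * x₁ - t)) (fun t => deriv (deriv z) (2 * x₁ - t))
        x₁ (2 * x₁ - x₀) C h1 h2 h3
        (by show z (2 * x₁ - x₁) = 0
            rw [show 2 * x₁ - x₁ = x₁ by ring, hz1])
        (by show -deriv z (2 * x₁ - x₁) = 0
            rw [show 2 * x₁ - x₁ = x₁ by ring, hz'1, neg_zero])
      have := key (2 * x₁ - s) ⟨by linarith [hs.2], by linarith [hs.1]⟩
      simpa [show 2 * x₁ - (2 * x₁ - s) = s by ring] using this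
    rcases le_total x x₁ with hle | hge
    · exact hbwd x ⟨hx, hle⟩
    · exact hfwd x ⟨hge, le_max_left _ _⟩
  exact ⟨hnn, hpos⟩

end
end
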